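/- arXiv:2306.01133 — 7 statements merged into one kernel-verified Lean document; each statement's English description precedes it below -/
import Mathlib

section
/- If T is a bounded adjointable operator on a Hilbert C*-module over a unital C*-algebra A (viewing A as a Hilbert module over itself) and the range of T is closed, then the range of the positive square root (T*T)^{1/2} is also closed. -/
/-!
Common setup: a unital C*-algebra `A` viewed as a right Hilbert module over itself
(with inner product `⟪a,b⟫ = a* b`).  Bounded adjointable operators `B(A)` are
identified with `A` itself acting by left multiplication.
-/

section Defs

variable {A : Type*} [CStarAlgebra A]

/-- A projection (self-adjoint idempotent). -/
def IsProjn (p : A) : Prop := IsSelfAdjoint p ∧ p * p = p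

/-- Murray–von Neumann equivalence: `p ∼ q` iff `∃ v, v v* = q ∧ v* v = p`. -/
def MvN (p q : A) : Prop := ∃ v : A, v * star v = q ∧ star v * v = p

/-- `a` is invertible up to the pair of projections `(p, q)` (Kečkić–Lazović). -/
def InvUpTo (a p q : A) : Prop :=
  ∃ b : A, (1 - q) * a * (1 - p) * b = 1 - q ∧ b * ((1 - q) * a * (1 - p)) = 1 - p

/-- A closed (right) submodule of `A` as a Hilbert module over itself. -/
def IsClosedSubmodule (S : Set A) : Prop :=
  IsClosed S ∧ (0 : A) ∈ S ∧ (∀ x ∈ S, ∀ y ∈ S, x + y ∈ S) ∧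
    (∀ x ∈ S, ∀ a : A, x * a ∈ S) ∧ (∀ x ∈ S, -x ∈ S) ∧ (∀ x ∈ S, ∀ c : ℂ, c • x ∈ S)

/-- Orthogonal complement with respect to `⟪a,b⟫ = a* b`. -/
def orthC (S : Set A) : Set A := {x : A | ∀ y ∈ S, star y * x = 0}

/-- `S` is orthogonally complementable in `A`: `A = S ⊕ S^⊥`. -/
def OrthComplementable (S : Set A) : Prop :=
  ∀ x : A, ∃ n ∈ S, ∃ m ∈ orthC S, x = n + m

/-- `p` is the orthogonal projection onto the submodule `S` (so `S = Im p`). -/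
def IsOrthProjOnto (p : A) (S : Set A) : Prop :=
  IsSelfAdjoint p ∧ p * p = p ∧ S = {x : A | p * x = x}

/-- `A = M ⊕̃ N`: direct (not necessarily orthogonal) sum decomposition. -/
def IsComplPair (M N : Set A) : Prop :=
  (M ∩ N ⊆ {0}) ∧ ∀ x : A, ∃ m ∈ M, ∃ n ∈ N, x = m + n

/-- Image of a submodule under the operator of left multiplication by `F`. -/
def imageOf (F : A) (S : Set A) : Set A := {y : A | ∃ x ∈ S, y = F * x}

/-- The restriction of (left multiplication by) `F` to `M` is an isomorphism onto `M'`: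
it maps `M` onto `M'` and is bounded below (hence bicontinuous onto `M'`). -/
def IsIsoOn (F : A) (M M' : Set A) : Prop :=
  (∀ x ∈ M, F * x ∈ M') ∧ (∀ y ∈ M', ∃ x ∈ M, F * x = y) ∧
    ∃ c > (0 : ℝ), ∀ x ∈ M, c * ‖x‖ ≤ ‖F * x‖

/-- Isomorphism of Hilbert submodules: a bicontinuous `A`-linear bijection `M → N`. -/
def SubmoduleIso (M N : Set A) : Prop :=
  ∃ f : A → A, (∀ x y : A, f (x + y) = f x + f y) ∧ (∀ x a : A, f (x * a) = f x * a) ∧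
    (∀ x ∈ M, f x ∈ N) ∧ (∀ y ∈ N, ∃ x ∈ M, f x = y) ∧
    (∃ C > (0 : ℝ), ∀ x ∈ M, ‖f x‖ ≤ C * ‖x‖) ∧
    (∃ c > (0 : ℝ), ∀ x ∈ M, c * ‖x‖ ≤ ‖f x‖)

end Defs

/-- An ideal of finite type elements in the sense of Kečkić–Lazović: a self-adjoint
two-sided ideal with an approximate unit consisting of projections, such that for any
two projections `p, q` in it there is `v` with `v v* = q` and `v* v ⊥ p`. -/
structure FiniteTypeIdeal (A : Type*) [CStarAlgebra A] where
  carrier : Set A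
  zero_mem : (0 : A) ∈ carrier
  add_mem : ∀ {x y : A}, x ∈ carrier → y ∈ carrier → x + y ∈ carrier
  mul_left_mem : ∀ (a : A) {x : A}, x ∈ carrier → a * x ∈ carrier
  mul_right_mem : ∀ (a : A) {x : A}, x ∈ carrier → x * a ∈ carrier
  star_mem : ∀ {x : A}, x ∈ carrier → star x ∈ carrier
  approx_unit : ∀ x ∈ carrier, ∀ ε > (0 : ℝ), ∃ p ∈ carrier, IsProjn p ∧ ‖x - p * x‖ < ε
  orth_exists : ∀ p q : A, p ∈ carrier → q ∈ carrier → IsProjn p → IsProjn q →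
    ∃ v : A, v * star v = q ∧ star v * v * p = 0 ∧ IsProjn (star v * v + p)

section Defs2

variable {A : Type*} [CStarAlgebra A]

/-- `OrthSumList L s` : `s` is a sum of pairwise orthogonal projections equivalent
(one by one) to the members of the list `L`.  Used to express sums of classes in the
semigroup `S(F)` of Murray–von Neumann classes of projections. -/
inductive OrthSumList : List A → A → Prop
  | nil : OrthSumList [] 0
  | cons {p p' s : A} {L : List A} : MvN p p' → OrthSumList L s → p' * s = 0 →
      OrthSumList (p :: L) (p' + s)

/-- Equality of the formal sums of the classes of the projections in `L1` and in `L2`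
in the Grothendieck group `K(F)` of the semigroup of Murray–von Neumann classes of
projections in `Fc`:  `Σ [L1] = Σ [L2]` in `K(F)` iff `Σ [L1] + [r] = Σ [L2] + [r]`
holds in the semigroup for some projection `r ∈ Fc`. -/
def KEqList (Fc : Set A) (L1 L2 : List A) : Prop :=
  ∃ r s t : A, IsProjn r ∧ r ∈ Fc ∧ OrthSumList (L1 ++ [r]) s ∧
    OrthSumList (L2 ++ [r]) t ∧ MvN s t

/-- `F` admits a decomposition `A = M₁ ⊕̃ N₁ → M₂ ⊕̃ N₂ = A` with respect to which it
is diagonal `diag(F₁, F₄)`, with `F₁ : M₁ → M₂` an isomorphism, and `pN1, pN2` are the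
orthogonal projections onto `N₁, N₂`. -/
def HasDiagDecomp (F pN1 pN2 : A) : Prop :=
  ∃ M1 N1 M2 N2 : Set A,
    IsClosedSubmodule M1 ∧ IsClosedSubmodule N1 ∧ IsClosedSubmodule M2 ∧
    IsClosedSubmodule N2 ∧ IsComplPair M1 N1 ∧ IsComplPair M2 N2 ∧
    IsIsoOn F M1 M2 ∧ (∀ x ∈ N1, F * x ∈ N2) ∧
    IsOrthProjOnto pN1 N1 ∧ IsOrthProjOnto pN2 N2

/-- The Mishchenko–Fomenko type Fredholm class `MKΦ(A)` relative to the ideal `Fc`: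
`F` has a diagonalizing decomposition whose corner projections lie in `Fc`.
Its index is `[pN1] - [pN2] ∈ K(F)`. -/
def MKPhi (Fc : FiniteTypeIdeal A) (F n1 n2 : A) : Prop :=
  HasDiagDecomp F n1 n2 ∧ n1 ∈ Fc.carrier ∧ n2 ∈ Fc.carrier

end Defs2

private lemma aux_preimage_bound {A : Type*} [CStarAlgebra A] (T : A)
    (h : IsClosed (Set.range fun x : A => T * x)) :
    ∃ C > (0:ℝ), ∀ y ∈ Set.range (fun x : A => T * x), ∃ x, T * x = y ∧ ‖x‖ ≤ C * ‖y‖ := by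
  let f0 : A →L[ℂ] A := ContinuousLinearMap.mul ℂ A T
  let K : Submodule ℂ A := LinearMap.range (f0 : A →ₗ[ℂ] A)
  have hKset : (K : Set A) = Set.range (fun x : A => T * x) := by
    ext y; simp [K, f0, LinearMap.mem_range, Set.mem_range]
  have hKclosed : IsClosed (K : Set A) := hKset ▸ h
  haveI : CompleteSpace K := hKclosed.completeSpace_coe
  have hmem : ∀ x : A, f0 x ∈ K := fun x => LinearMap.mem_range_self _ x
  let g : A →L[ℂ] K := f0.codRestrict K hmem
  have hsurj : Function.Surjective g := by
    rintro ⟨y, hy⟩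
    obtain ⟨x, hx⟩ := hy
    exact ⟨x, Subtype.ext hx⟩
  obtain ⟨C, hC0, hC⟩ := g.exists_preimage_norm_le hsurj
  refine ⟨C, hC0, ?_⟩
  intro y hy
  have hyK : y ∈ K := by rw [← SetLike.mem_coe, hKset]; exact hy
  obtain ⟨x, hx, hnx⟩ := hC ⟨y, hyK⟩
  refine ⟨x, ?_, ?_⟩
  · simpa [g, f0] using congrArg Subtype.val hx
  · simpa using hnx

private lemma aux_gap_closed {A : Type*} [CStarAlgebra A] [PartialOrder A] [StarOrderedRing A]
    (a : A) (ha0 : 0 ≤ a) (δ : ℝ) (hδ : 0 < δ)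
    (hgap : ∀ t ∈ spectrum ℝ a, t = 0 ∨ δ ≤ t) :
    IsClosed (Set.range fun x : A => CFC.sqrt a * x) := by
  have ha : IsSelfAdjoint a := IsSelfAdjoint.of_nonneg ha0
  have hspec_nn : ∀ t ∈ spectrum ℝ a, 0 ≤ t := fun t ht => spectrum_nonneg_of_nonneg ha0 ht
  -- sqrt as real cfc
  have hs_eq : CFC.sqrt a = cfc Real.sqrt a := by
    refine CFC.sqrt_unique (a := a) (b := cfc Real.sqrt a) ?_ ?_
    · rw [← cfc_mul (hf := Real.continuous_sqrt.continuousOn) (hg := Real.continuous_sqrt.continuousOn)]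
      calc cfc (fun x => Real.sqrt x * Real.sqrt x) a
          = cfc (id : ℝ → ℝ) a :=
            cfc_congr (fun t ht => Real.mul_self_sqrt (hspec_nn t ht))
        _ = a := cfc_id ℝ a
    · exact cfc_nonneg (fun t _ => Real.sqrt_nonneg t)
  set hh : ℝ → ℝ := fun t => min 1 (max 0 (t / δ)) with hh_def
  have hh_cont : Continuous hh := by fun_prop
  set gg : ℝ → ℝ := fun t => hh t / Real.sqrt (max t (δ/2)) with gg_def
  have hden : ∀ t : ℝ, Real.sqrt (max t (δ/2)) ≠ 0 := by
    intro t
    have : (0:ℝ) < max t (δ/2) := lt_max_of_lt_right (by linarith)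
    positivity
  have gg_cont : Continuous gg := by
    apply hh_cont.div
    · fun_prop
    · exact hden
  -- key pointwise identities on spectrum
  have hh0 : hh 0 = 0 := by simp [hh_def]
  have hh1 : ∀ t, δ ≤ t → hh t = 1 := by
    intro t ht
    have h1 : (1:ℝ) ≤ t / δ := (one_le_div hδ).mpr ht
    simp [hh_def, min_eq_left, le_max_of_le_right h1, h1.trans (le_max_right _ _)]
  set e : A := cfc hh a with he_def
  have he_mul_sqrt : e * cfc Real.sqrt a = cfc Real.sqrt a := by
    rw [← cfc_mul (hf := hh_cont.continuousOn) (hg := Real.continuous_sqrt.continuousOn)]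
    apply cfc_congr
    intro t ht
    rcases hgap t ht with rfl | hge
    · simp
    · simp [hh1 t hge]
  have hsqrt_mul_g : cfc Real.sqrt a * cfc gg a = e := by
    rw [← cfc_mul (hf := Real.continuous_sqrt.continuousOn) (hg := gg_cont.continuousOn)]
    apply cfc_congr
    intro t ht
    rcases hgap t ht with rfl | hge
    · simp [gg_def, hh0]
    · have ht0 : (0:ℝ) < t := hδ.trans_le hge
      have hmax : max t (δ/2) = t := max_eq_left (by linarith)
      have hst : Real.sqrt t ≠ 0 := by positivity
      simp only [gg_def, hmax, hh1 t hge]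
      field_simp
  -- range = fixed points of e
  have hrange : (Set.range fun x : A => CFC.sqrt a * x) = {x : A | e * x - x = 0} := by
    ext x
    constructor
    · rintro ⟨y, rfl⟩
      show e * (CFC.sqrt a * y) - CFC.sqrt a * y = 0
      rw [hs_eq, ← mul_assoc, he_mul_sqrt, sub_self]
    · intro hx
      have hx' : e * x = x := sub_eq_zero.mp hx
      refine ⟨cfc gg a * x, ?_⟩
      show CFC.sqrt a * (cfc gg a * x) = x
      rw [hs_eq, ← mul_assoc, hsqrt_mul_g, hx']
  rw [hrange]
  have : IsClosed ((fun x : A => e * x - x) ⁻¹' {0}) :=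
    IsClosed.preimage (by fun_prop) isClosed_singleton
  simpa [Set.preimage, Set.mem_singleton_iff] using this

private lemma aux_closed_gap {A : Type*} [CStarAlgebra A] [PartialOrder A] [StarOrderedRing A]
    (T : A) (C : ℝ) (hC0 : 0 < C)
    (hC : ∀ y ∈ Set.range (fun x : A => T * x), ∃ x, T * x = y ∧ ‖x‖ ≤ C * ‖y‖) :
    ∀ t ∈ spectrum ℝ (star T * T), t = 0 ∨ 2/(9*C^2) ≤ t := by
  set a : A := star T * T with ha_def
  have ha : IsSelfAdjoint a := IsSelfAdjoint.star_mul_self T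
  have ha0 : (0:A) ≤ a := star_mul_self_nonneg T
  intro t0 ht0
  by_contra hcon
  push_neg at hcon
  obtain ⟨ht0ne, ht0lt⟩ := hcon
  have ht0nn : 0 ≤ t0 := spectrum_nonneg_of_nonneg ha0 ht0
  have ht0pos : 0 < t0 := lt_of_le_of_ne ht0nn (Ne.symm ht0ne)
  -- bump function at t0
  set f : ℝ → ℝ := fun t => max 0 (1 - |t - t0| * (2/t0)) with hf_def
  have hf_cont : Continuous f := by fun_prop
  have hf_t0 : f t0 = 1 := by simp [hf_def]
  have hf_nonneg : ∀ t, 0 ≤ f t := fun t => le_max_left _ _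
  have hf_le_one : ∀ t, f t ≤ 1 := by
    intro t
    have h1 : 0 ≤ |t - t0| * (2/t0) := by positivity
    simp only [hf_def]
    rw [max_le_iff]
    constructor <;> [norm_num; linarith]
  have hf_supp : ∀ t, f t ≠ 0 → t ≤ 3*t0/2 := by
    intro t hft
    have h1 : 0 < 1 - |t - t0| * (2/t0) := by
      by_contra hle
      push_neg at hle
      exact hft (by simp only [hf_def]; exact max_eq_left hle)
    have h1' : |t - t0| * (2/t0) < 1 := by linarith
    have h2 : |t - t0| < t0/2 := by
      have h' := mul_lt_mul_of_pos_right h1' (by positivity : (0:ℝ) < t0/2)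
      rw [one_mul] at h'
      calc |t - t0| = |t - t0| * (2/t0) * (t0/2) := by field_simp
        _ < t0/2 := h'
    linarith [(abs_lt.mp h2).2]
  set x : A := cfc f a with hx_def
  have hx_sa : IsSelfAdjoint x := cfc_predicate f a
  -- products
  have hxa : x * a = cfc (fun t => f t * t) a := by
    conv_lhs => rw [← cfc_id ℝ a]
    exact (cfc_mul f id a (hf_cont.continuousOn) continuousOn_id).symm
  have hxax : x * a * x = cfc (fun t => f t * t * f t) a := by
    rw [hxa]
    exact (cfc_mul (fun t => f t * t) f a (by fun_prop) (hf_cont.continuousOn)).symm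
  -- norm bounds
  set B : ℝ := 3/2 * t0 with hB_def
  have hB_pos : 0 < B := by positivity
  have h_ub : ∀ (g : ℝ → ℝ), (∀ t, 0 ≤ t → |g t| ≤ |f t * t|) → True := fun _ _ => trivial
  have key_bound : ∀ t ∈ spectrum ℝ a, ‖f t * t‖ ≤ B := by
    intro t ht
    have htnn : 0 ≤ t := spectrum_nonneg_of_nonneg ha0 ht
    rcases eq_or_ne (f t) 0 with hf0 | hf0
    · simp [hf0]; positivity
    · have hts := hf_supp t hf0
      rw [Real.norm_eq_abs, abs_mul, abs_of_nonneg (hf_nonneg t), abs_of_nonneg htnn]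
      nlinarith [hf_le_one t, hf_nonneg t]
  have h_xa_norm : ‖x * a‖ ≤ B := by
    rw [hxa]
    exact norm_cfc_le hB_pos.le key_bound
  have h_xax_ub : ‖x * a * x‖ ≤ B := by
    rw [hxax]
    refine norm_cfc_le hB_pos.le ?_
    intro t ht
    have htnn : 0 ≤ t := spectrum_nonneg_of_nonneg ha0 ht
    calc ‖f t * t * f t‖ = ‖f t * t‖ * ‖f t‖ := by rw [← norm_mul]
      _ ≤ B * 1 := by
          apply mul_le_mul (key_bound t ht) ?_ (norm_nonneg _) hB_pos.le
          rw [Real.norm_eq_abs, abs_of_nonneg (hf_nonneg t)]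
          exact hf_le_one t
      _ = B := mul_one B
  have h_xax_lb : t0 ≤ ‖x * a * x‖ := by
    rw [hxax]
    have := norm_apply_le_norm_cfc (fun t => f t * t * f t) a ht0 (by fun_prop) ha
    simp only [hf_t0, one_mul, mul_one, Real.norm_eq_abs, abs_of_nonneg ht0nn] at this
    exact this
  -- the vector y = T x and its preimage
  set y : A := T * x with hy_def
  have hyy : ‖y‖ * ‖y‖ = ‖x * a * x‖ := by
    rw [← CStarRing.norm_star_mul_self]
    congr 1
    rw [hy_def, star_mul, hx_sa.star_eq, ha_def]
    simp only [mul_assoc]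
  obtain ⟨z, hz, hnz⟩ := hC y ⟨x, rfl⟩
  have hax : a * x = a * z := by
    rw [ha_def, mul_assoc, mul_assoc, hz]
  have hchain : t0 ≤ B * (C * ‖y‖) := by
    calc t0 ≤ ‖x * a * x‖ := h_xax_lb
      _ = ‖x * a * z‖ := by rw [mul_assoc, hax, ← mul_assoc]
      _ ≤ ‖x * a‖ * ‖z‖ := norm_mul_le _ _
      _ ≤ B * (C * ‖y‖) := mul_le_mul h_xa_norm hnz (norm_nonneg z) hB_pos.le
  have hy_sq : ‖y‖ * ‖y‖ ≤ B := hyy ▸ h_xax_ub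
  have hyn : 0 ≤ ‖y‖ := norm_nonneg y
  rw [hB_def] at hchain hy_sq
  have h1 : (1:ℝ) ≤ 3/2 * (C * ‖y‖) := by
    rw [← mul_le_mul_iff_right₀ ht0pos]
    linarith [hchain]
  have h2 : (2:ℝ)/3 ≤ C * ‖y‖ := by linarith
  have h3 : t0 * (9 * C^2) < 2 := (lt_div_iff₀ (by positivity)).mp ht0lt
  have h4 : (4:ℝ)/9 ≤ (C*‖y‖) * (C*‖y‖) := by nlinarith [h2]
  have h5 : C^2 * (‖y‖*‖y‖) ≤ C^2 * (3/2*t0) :=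
    mul_le_mul_of_nonneg_left hy_sq (sq_nonneg C)
  nlinarith [h3, h4, h5]

/-- If `T ∈ B(A)` has closed range, then `(T*T)^{1/2}` has closed range. -/
theorem stmt_0 {A : Type*} [CStarAlgebra A] [PartialOrder A] [StarOrderedRing A]
    (T : A) (h : IsClosed (Set.range fun x : A => T * x)) :
    IsClosed (Set.range fun x : A => CFC.sqrt (star T * T) * x) := by
  obtain ⟨C, hC0, hC⟩ := aux_preimage_bound T h
  exact aux_gap_closed (star T * T) (star_mul_self_nonneg T) (2/(9*C^2))
    (by positivity) (aux_closed_gap T C hC0 hC)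
end

section
/- If T is a bounded adjointable operator on a Hilbert C*-module over a unital C*-algebra with closed range, then T admits a polar decomposition: there exists a partial isometry V with T = V(T*T)^{1/2}, where V*V is the orthogonal projection onto (ker T)^⊥ and VV* is the orthogonal projection onto the range of T. -/
section Aux
open scoped NNReal

lemma key1 {A : Type*} [CStarAlgebra A] (T : A)
    (h : IsClosed (Set.range fun x : A => T * x)) :
    ∃ C > (0:ℝ), ∀ x : A, ∃ x' : A, T * x' = T * x ∧ ‖x'‖ ≤ C * ‖T * x‖ := by
  set L : A →L[ℂ] A := ContinuousLinearMap.mul ℂ A T with hL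
  have hLa : ∀ x : A, L x = T * x := fun x => rfl
  set Y : Submodule ℂ A := LinearMap.range (L : A →ₗ[ℂ] A) with hY
  have hYc : IsClosed (Y : Set A) := by
    exact h
  haveI : CompleteSpace Y := hYc.completeSpace_coe
  set Lr : A →L[ℂ] Y := L.codRestrict Y (fun x => LinearMap.mem_range_self _ x) with hLr
  have hsurj : Function.Surjective Lr := by
    rintro ⟨y, hy⟩
    obtain ⟨x, hx⟩ := hy
    exact ⟨x, Subtype.ext hx⟩
  obtain ⟨C, hC, hCle⟩ := Lr.exists_preimage_norm_le hsurj
  refine ⟨C, hC, fun x => ?_⟩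
  obtain ⟨x', hx', hle⟩ := hCle (Lr x)
  refine ⟨x', ?_, ?_⟩
  · exact congrArg Subtype.val hx'
  · exact hle

lemma key2 {A : Type*} [CStarAlgebra A] [PartialOrder A] [StarOrderedRing A] (T : A)
    (h : IsClosed (Set.range fun x : A => T * x)) :
    ∃ ε > (0:ℝ), ∀ t ∈ spectrum ℝ (star T * T), t = 0 ∨ ε ≤ t := by
  obtain ⟨C, hC, hCle⟩ := key1 T h
  set a := star T * T with ha
  have ha0 : (0:A) ≤ a := star_mul_self_nonneg T
  have hsa : IsSelfAdjoint a := .star_mul_self T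
  by_contra hcon
  push_neg at hcon
  obtain ⟨t, htσ, htne, htlt⟩ := hcon (1/(8*C^2+8)) (by positivity)
  have ht0 : 0 < t := lt_of_le_of_ne (spectrum_nonneg_of_nonneg ha0 htσ) (Ne.symm htne)
  -- bump functions
  set bump : ℝ → ℝ := fun s => max 0 (min (2*s/t - 1) (3 - 2*s/t)) with hbump
  set h' : ℝ → ℝ := fun s => t⁻¹ * bump s with hh'
  set f : ℝ → ℝ := fun s => s * h' s with hf
  have hbumpc : Continuous bump := by
    apply continuous_const.max
    exact (((continuous_const.mul continuous_id).div_const t).sub continuous_const).min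
      (continuous_const.sub ((continuous_const.mul continuous_id).div_const t))
  have hh'c : Continuous h' := continuous_const.mul hbumpc
  have hfc : Continuous f := continuous_id.mul hh'c
  have hbump01 : ∀ s, 0 ≤ bump s ∧ bump s ≤ 1 := by
    intro s
    refine ⟨le_max_left _ _, ?_⟩
    rcases le_total (2*s/t - 1) (3 - 2*s/t) with hc | hc
    · rw [hbump]; simp only [min_eq_left hc]
      rcases le_total (2*s/t - 1) 0 with h0 | h0
      · simp [max_eq_left h0]
      · rw [max_eq_right h0]; nlinarith
    · rw [hbump]; simp only [min_eq_right hc]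
      rcases le_total (3 - 2*s/t) 0 with h0 | h0
      · simp [max_eq_left h0]
      · rw [max_eq_right h0]; nlinarith
  have hsupp : ∀ s, bump s ≠ 0 → t/2 ≤ s ∧ s ≤ 3*t/2 := by
    intro s hs
    by_contra hcon2
    apply hs
    rw [hbump]; simp only
    rcases not_and_or.mp hcon2 with h1 | h1
    · push_neg at h1
      have : 2*s/t - 1 < 0 := by
        have := (div_lt_div_iff_of_pos_right ht0).mpr (by linarith : 2*s < t)
        rw [div_self (ne_of_gt ht0)] at this
        linarith [this]
      rw [max_eq_left]
      exact le_of_lt (lt_of_le_of_lt (min_le_left _ _) this)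
    · push_neg at h1
      have : 3 - 2*s/t < 0 := by
        have := (div_lt_div_iff_of_pos_right ht0).mpr (by linarith : 3*t < 2*s)
        rw [mul_div_assoc, div_self (ne_of_gt ht0), mul_one] at this
        linarith [this]
      rw [max_eq_left]
      exact le_of_lt (lt_of_le_of_lt (min_le_right _ _) this)
  have hfbound : ∀ s, |f s| ≤ 3/2 := by
    intro s
    by_cases hs : bump s = 0
    · simp [hf, hh', hs]; norm_num
    · obtain ⟨hs1, hs2⟩ := hsupp s hs
      obtain ⟨hb0, hb1⟩ := hbump01 s
      have hs0 : 0 ≤ s := le_trans (by positivity) hs1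
      rw [hf, hh', abs_of_nonneg (by positivity)]
      calc s * (t⁻¹ * bump s) ≤ (3*t/2) * (t⁻¹ * 1) := by
            apply mul_le_mul hs2 (by gcongr) (by positivity) (by positivity)
        _ = 3/2 := by field_simp
  have hft : f t = 1 := by
    rw [hf, hh', hbump]
    simp only
    rw [mul_div_assoc, div_self (ne_of_gt ht0)]
    norm_num
    field_simp
  -- the element x = f(a)
  set x := cfc f a with hx
  have hxsa : IsSelfAdjoint x := cfc_predicate f a
  have hx1 : (1:ℝ) ≤ ‖x‖ := by
    have := norm_apply_le_norm_cfc f a htσ hfc.continuousOn hsa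
    rwa [hft, norm_one] at this
  have hTxsq : ‖T * x‖ * ‖T * x‖ ≤ 27 * t / 8 := by
    have e1 : ‖T * x‖ * ‖T * x‖ = ‖star (T * x) * (T * x)‖ :=
      (CStarRing.norm_star_mul_self).symm
    have e2 : star (T * x) * (T * x) = x * (a * x) := by
      rw [star_mul, hxsa.star_eq, ha]
      simp [mul_assoc]
    have e3' : cfc (fun s : ℝ => s * f s) a = a * cfc f a := by
      have h0 := cfc_mul (fun s : ℝ => s) f a continuous_id'.continuousOn hfc.continuousOn
      rw [cfc_id' (R := ℝ) a] at h0
      exact h0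
    have e3 : x * (a * x) = cfc (fun s => f s * (s * f s)) a := by
      rw [hx, ← e3']
      exact (cfc_mul f (fun s : ℝ => s * f s) a hfc.continuousOn
        (continuous_id'.mul hfc).continuousOn).symm
    rw [e1, e2, e3]
    apply norm_cfc_le (by positivity)
    intro s hs
    by_cases hbs : bump s = 0
    · simp [hf, hh', hbs]; positivity
    · obtain ⟨hs1, hs2⟩ := hsupp s hbs
      have hs0 : 0 < s := lt_of_lt_of_le (by positivity) hs1
      have hfs := hfbound s
      rw [Real.norm_eq_abs]
      have e : |f s * (s * f s)| = s * (|f s| * |f s|) := by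
        rw [show f s * (s * f s) = s * (f s * f s) by ring, abs_mul, abs_of_pos hs0, abs_mul]
      rw [e]
      calc s * (|f s| * |f s|) ≤ s * ((3/2) * (3/2)) :=
            mul_le_mul_of_nonneg_left
              (mul_le_mul hfs hfs (abs_nonneg _) (by norm_num)) hs0.le
        _ ≤ (3*t/2) * ((3/2) * (3/2)) := mul_le_mul_of_nonneg_right hs2 (by norm_num)
        _ = 27 * t / 8 := by ring
  obtain ⟨x', hTx', hnx'⟩ := hCle x
  have hker : a * (x - x') = 0 := by
    have : T * (x - x') = 0 := by rw [mul_sub, hTx', sub_self]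
    rw [ha, mul_assoc, this, mul_zero]
  have hxx : x * (x - x') = 0 := by
    have hmm := cfc_mul h' (fun s : ℝ => s) a hh'c.continuousOn continuous_id'.continuousOn
    rw [cfc_id' (R := ℝ) a] at hmm
    have hxalt : x = cfc h' a * a := by
      rw [hx, hf]
      rw [show (fun s : ℝ => s * h' s) = fun s => h' s * s from funext fun s => mul_comm _ _]
      exact hmm
    have e : x * (x - x') = (cfc h' a * a) * (x - x') := by rw [← hxalt]
    rw [e, mul_assoc, hker, mul_zero]
  have hxx' : x * x' = x * x := by
    have := hxx
    rw [mul_sub, sub_eq_zero] at this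
    exact this.symm
  have hnormxx : ‖x‖ * ‖x‖ = ‖x * x‖ := by
    have := CStarRing.norm_star_mul_self (x := x)
    rw [hxsa.star_eq] at this
    exact this.symm
  have hchain : ‖x‖ * ‖x‖ ≤ ‖x‖ * (C * ‖T * x‖) := by
    calc ‖x‖ * ‖x‖ = ‖x * x‖ := hnormxx
      _ = ‖x * x'‖ := by rw [hxx']
      _ ≤ ‖x‖ * ‖x'‖ := norm_mul_le _ _
      _ ≤ ‖x‖ * (C * ‖T * x‖) := by
          apply mul_le_mul_of_nonneg_left hnx' (norm_nonneg _)
  have hxpos : (0:ℝ) < ‖x‖ := lt_of_lt_of_le one_pos hx1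
  have hfin : 1 ≤ C * ‖T * x‖ :=
    le_trans hx1 (le_of_mul_le_mul_left hchain hxpos)
  have hTx0 : (0:ℝ) ≤ ‖T * x‖ := norm_nonneg _
  have hC2 : (0:ℝ) < C^2 := by positivity
  have h1 : (1:ℝ) ≤ (C * ‖T * x‖) * (C * ‖T * x‖) := by nlinarith [hfin]
  have h3 : C^2 * (‖T * x‖ * ‖T * x‖) ≤ C^2 * (27 * t / 8) :=
    mul_le_mul_of_nonneg_left hTxsq (le_of_lt hC2)
  have h5 : t * (8*C^2+8) < 1 := (lt_div_iff₀ (by positivity)).mp htlt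
  nlinarith [h1, h3, h5, hC2, ht0]

lemma contOnUnion {ε : ℝ} (hε : 0 < ε) {f : ℝ → ℝ} (hf : ContinuousOn f (Set.Ici ε)) :
    ContinuousOn f ({0} ∪ Set.Ici ε) := by
  intro x hx
  have h0 : ContinuousWithinAt f {0} x := by
    rcases eq_or_ne x 0 with rfl | hx0
    · exact continuousWithinAt_singleton
    · exact continuousWithinAt_of_notMem_closure (by simpa using hx0)
  have h1 : ContinuousWithinAt f (Set.Ici ε) x := by
    rcases hx with hx | hx
    · rw [Set.mem_singleton_iff] at hx; subst hx
      refine continuousWithinAt_of_notMem_closure ?_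
      rw [IsClosed.closure_eq isClosed_Ici]
      simpa using not_le.mpr hε
    · exact hf x hx
  exact h0.union h1

theorem polar_decomp_aux {A : Type*} [CStarAlgebra A] [PartialOrder A] [StarOrderedRing A]
    (T : A) (h : IsClosed (Set.range fun x : A => T * x)) :
    ∃ V : A, V * star V * V = V ∧ T = V * CFC.sqrt (star T * T) ∧
      (IsSelfAdjoint (star V * V) ∧ (star V * V) * (star V * V) = star V * V ∧
        {x : A | ∀ y ∈ {x : A | T * x = 0}, star y * x = 0} = {x : A | (star V * V) * x = x}) ∧
      (IsSelfAdjoint (V * star V) ∧ (V * star V) * (V * star V) = V * star V ∧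
        (Set.range fun x : A => T * x) = {x : A | (V * star V) * x = x}) := by
  obtain ⟨ε, hε, hiso⟩ := key2 T h
  set a := star T * T with ha
  have ha0 : (0:A) ≤ a := star_mul_self_nonneg T
  have hsa : IsSelfAdjoint a := .star_mul_self T
  have hσS : spectrum ℝ a ⊆ {0} ∪ Set.Ici ε := by
    intro t ht
    rcases hiso t ht with h0 | h1
    · exact Or.inl (by simp [h0])
    · exact Or.inr h1
  have hσ0 : ∀ s ∈ spectrum ℝ a, 0 ≤ s := fun s hs => spectrum_nonneg_of_nonneg ha0 hs
  have hspos : ∀ s ∈ spectrum ℝ a, s ≠ 0 → 0 < s :=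
    fun s hs hs0 => lt_of_le_of_ne (hσ0 s hs) (Ne.symm hs0)
  have hinv : ContinuousOn (fun s : ℝ => s⁻¹) (spectrum ℝ a) := by
    refine (contOnUnion hε ?_).mono hσS
    intro x hx
    exact (continuousAt_inv₀ (ne_of_gt (lt_of_lt_of_le hε hx))).continuousWithinAt
  set g : ℝ → ℝ := fun s => Real.sqrt s⁻¹ with hgdef
  set χ : ℝ → ℝ := fun s => s * s⁻¹ with hχdef
  have hgσ : ContinuousOn g (spectrum ℝ a) := Real.continuous_sqrt.comp_continuousOn hinv
  have hχσ : ContinuousOn χ (spectrum ℝ a) := continuous_id'.continuousOn.mul hinv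
  set b := cfc g a with hb
  set p := cfc χ a with hp
  have hbsa : IsSelfAdjoint b := cfc_predicate g a
  have hpsa : IsSelfAdjoint p := cfc_predicate χ a
  -- p * a = a and a * p = a
  have hpa : p * a = a := by
    have h0 := cfc_mul χ (fun s : ℝ => s) a hχσ continuous_id'.continuousOn
    rw [cfc_id' (R := ℝ) a] at h0
    rw [hp, ← h0]
    have h1 : cfc (fun x : ℝ => χ x * x) a = cfc (fun x : ℝ => x) a := by
      apply cfc_congr
      intro s hs
      rcases eq_or_ne s 0 with rfl | hs0
      · simp [hχdef]
      · simp only [hχdef]; field_simp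
    exact h1.trans (cfc_id' (R := ℝ) a)
  have hap : a * p = a := by
    have h0 := cfc_mul (fun s : ℝ => s) χ a continuous_id'.continuousOn hχσ
    rw [cfc_id' (R := ℝ) a] at h0
    rw [hp, ← h0]
    have h1 : cfc (fun x : ℝ => x * χ x) a = cfc (fun x : ℝ => x) a := by
      apply cfc_congr
      intro s hs
      rcases eq_or_ne s 0 with rfl | hs0
      · simp [hχdef]
      · simp only [hχdef]; field_simp
    exact h1.trans (cfc_id' (R := ℝ) a)
  have hpp : p * p = p := by
    rw [hp, ← cfc_mul χ χ a hχσ hχσ]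
    apply cfc_congr
    intro s hs
    rcases eq_or_ne s 0 with rfl | hs0
    · simp [hχdef]
    · simp only [hχdef]; field_simp
  -- T * p = T
  have hTp : T * p = T := by
    have h1p : IsSelfAdjoint (1 - p) := ((IsSelfAdjoint.one (R := A))).sub hpsa
    have hzero : star (T * (1 - p)) * (T * (1 - p)) = 0 := by
      have e : star (T * (1 - p)) * (T * (1 - p)) = (1 - p) * (a * (1 - p)) := by
        rw [star_mul, h1p.star_eq, ha]
        simp [mul_assoc]
      have e2 : a * (1 - p) = 0 := by rw [mul_sub, mul_one, hap, sub_self]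
      rw [e, e2, mul_zero]
    have := (CStarRing.star_mul_self_eq_zero_iff _).mp hzero
    rw [mul_sub, mul_one, sub_eq_zero] at this
    exact this.symm
  set V := T * b with hV
  -- star V * V = p
  have hVsV : star V * V = p := by
    rw [hV, star_mul, hbsa.star_eq]
    have e : b * star T * (T * b) = b * (a * b) := by
      rw [ha]; simp [mul_assoc]
    rw [e]
    have h0 := cfc_mul (fun s : ℝ => s) g a continuous_id'.continuousOn hgσ
    rw [cfc_id' (R := ℝ) a] at h0
    have e2 : b * (a * b) = cfc (fun s => g s * (s * g s)) a := by
      rw [hb, ← h0]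
      exact (cfc_mul g (fun s : ℝ => s * g s) a hgσ
        (continuous_id'.continuousOn.mul hgσ)).symm
    rw [e2, hp]
    apply cfc_congr
    intro s hs
    have hgg : g s * g s = s⁻¹ := Real.mul_self_sqrt (inv_nonneg.mpr (hσ0 s hs))
    calc g s * (s * g s) = (g s * g s) * s := by ring
      _ = s⁻¹ * s := by rw [hgg]
      _ = χ s := mul_comm _ _
  -- b * p = b
  have hbp : b * p = b := by
    rw [hb, hp, ← cfc_mul g χ a hgσ hχσ]
    apply cfc_congr
    intro s hs
    rcases eq_or_ne s 0 with rfl | hs0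
    · simp [hgdef, hχdef]
    · simp only [hχdef, mul_inv_cancel₀ hs0, mul_one]
  have hVVV : V * star V * V = V := by
    calc V * star V * V = V * (star V * V) := by rw [mul_assoc]
      _ = V * p := by rw [hVsV]
      _ = T * (b * p) := by rw [hV, mul_assoc]
      _ = T * b := by rw [hbp]
      _ = V := hV.symm
  -- sqrt
  have hsqrt : CFC.sqrt a = cfc Real.sqrt a := by
    rw [CFC.sqrt_eq_cfc, cfc_nnreal_eq_real _ _ ha0]
    apply cfc_congr
    intro s hs
    simp only [Real.sqrt]
  have hbsqrt : b * cfc Real.sqrt a = p := by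
    rw [hb, hp, ← cfc_mul g Real.sqrt a hgσ Real.continuous_sqrt.continuousOn]
    apply cfc_congr
    intro s hs
    rcases eq_or_ne s 0 with rfl | hs0
    · simp [hgdef, hχdef]
    · have hs1 : 0 < s := hspos s hs hs0
      simp only [hgdef, hχdef]
      rw [Real.sqrt_inv, inv_mul_cancel₀ (ne_of_gt (Real.sqrt_pos.mpr hs1)),
        mul_inv_cancel₀ hs0]
  have hTeq : T = V * CFC.sqrt a := by
    rw [hsqrt, hV, mul_assoc, hbsqrt]
    exact hTp.symm
  -- star V * T = sqrt
  have hVsT : star V * T = cfc Real.sqrt a := by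
    rw [hV, star_mul, hbsa.star_eq, mul_assoc, ← ha]
    have h0 := cfc_mul g (fun s : ℝ => s) a hgσ continuous_id'.continuousOn
    rw [cfc_id' (R := ℝ) a] at h0
    rw [hb, ← h0]
    apply cfc_congr
    intro s hs
    rcases eq_or_ne s 0 with rfl | hs0
    · simp [hgdef]
    · have hs1 : 0 < s := hspos s hs hs0
      simp only [hgdef]
      rw [Real.sqrt_inv, inv_mul_eq_div, Real.div_sqrt]
  -- kernel fact
  have hker : ∀ y : A, T * y = 0 → p * y = 0 := by
    intro y hy
    have hay : a * y = 0 := by rw [ha, mul_assoc, hy, mul_zero]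
    have h0 := cfc_mul (fun s : ℝ => s⁻¹) (fun s : ℝ => s) a hinv continuous_id'.continuousOn
    rw [cfc_id' (R := ℝ) a] at h0
    have hp' : p = cfc (fun s : ℝ => s⁻¹) a * a := by
      rw [hp, ← h0]
      exact cfc_congr fun s hs => mul_comm s s⁻¹
    rw [hp', mul_assoc, hay, mul_zero]
  refine ⟨V, hVVV, hTeq, ⟨?_, ?_, ?_⟩, ⟨?_, ?_, ?_⟩⟩
  · rw [hVsV]; exact hpsa
  · rw [hVsV]; exact hpp
  · rw [hVsV]
    ext x
    constructor
    · intro hx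
      simp only [Set.mem_setOf_eq] at hx ⊢
      set k := x - p * x with hk
      have hTk : T * k = 0 := by
        rw [hk, mul_sub, ← mul_assoc, hTp, sub_self]
      have hkx : star k * x = 0 := hx k hTk
      have hpk : p * k = 0 := by
        rw [hk, mul_sub, ← mul_assoc, hpp, sub_self]
      have hkpx : star k * (p * x) = 0 := by
        have : star k * p = 0 := by
          have e := congrArg star hpk
          rw [star_mul, hpsa.star_eq, star_zero] at e
          exact e
        rw [← mul_assoc, this, zero_mul]
      have hkk : star k * k = 0 := by
        rw [hk, mul_sub, hkx, hkpx, sub_self]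
      have : k = 0 := (CStarRing.star_mul_self_eq_zero_iff _).mp hkk
      rw [hk, sub_eq_zero] at this
      exact this.symm
    · intro hx
      simp only [Set.mem_setOf_eq] at hx ⊢
      intro y hy
      have hpy : p * y = 0 := hker y hy
      have hyp : star y * p = 0 := by
        have e := congrArg star hpy
        rw [star_mul, hpsa.star_eq, star_zero] at e
        exact e
      rw [← hx, ← mul_assoc, hyp, zero_mul]
  · have : star (V * star V) = V * star V := by rw [star_mul, star_star]
    exact this
  · rw [← mul_assoc, hVVV]
  · ext y
    constructor
    · rintro ⟨x, rfl⟩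
      simp only [Set.mem_setOf_eq]
      have hqT : V * star V * T = T := by
        rw [mul_assoc, hVsT, ← hsqrt]
        exact hTeq.symm
      rw [← mul_assoc, hqT]
    · intro hy
      simp only [Set.mem_setOf_eq] at hy
      refine ⟨b * (star V * y), ?_⟩
      calc T * (b * (star V * y)) = (T * b) * (star V * y) := (mul_assoc _ _ _).symm
        _ = V * (star V * y) := by rw [← hV]
        _ = (V * star V) * y := (mul_assoc _ _ _).symm
        _ = y := hy

end Aux

/-- If `T ∈ B(A)` has closed range then `T` admits a polar decomposition
`T = V (T*T)^{1/2}` with `V` a partial isometry, `V* V` the orthogonal projection onto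
`(ker T)^⊥` and `V V*` the orthogonal projection onto `Im T`. -/
theorem stmt_2 {A : Type*} [CStarAlgebra A] [PartialOrder A] [StarOrderedRing A]
    (T : A) (h : IsClosed (Set.range fun x : A => T * x)) :
    ∃ V : A, V * star V * V = V ∧ T = V * CFC.sqrt (star T * T) ∧
      IsOrthProjOnto (star V * V) (orthC {x : A | T * x = 0}) ∧
      IsOrthProjOnto (V * star V) (Set.range fun x : A => T * x) := by
  obtain ⟨V, h1, h2, ⟨h3a, h3b, h3c⟩, h4a, h4b, h4c⟩ := polar_decomp_aux T h
  exact ⟨V, h1, h2, ⟨h3a, h3b, h3c⟩, ⟨h4a, h4b, h4c⟩⟩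
end

section
/- Let {P_α} be an approximate unit of projections for an ideal F of finite type elements in a unital C*-algebra A, and let N be a closed orthogonally complementable submodule of A (viewed as a Hilbert module over itself) with P_N ∈ F. Then there exist an index α₀ and a closed submodule M of A such that Im(I − P_{α₀}) ⊆ M and A = M ⊕̃ N (direct sum of submodules, not necessarily orthogonal). -/
/-- given an approximate unit `{P_α}` of projections for the ideal `F` of
finite type elements, and `N` a closed orthogonally complementable submodule with
`P_N ∈ F`, there are `α₀` and a closed submodule `M` with `Im (I - P_{α₀}) ⊆ M` and
`A = M ⊕̃ N`. -/
theorem stmt_6 {A : Type*} [CStarAlgebra A] {ι : Type*} [Preorder ι]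
    [IsDirected ι (· ≤ ·)] [Nonempty ι] (F : FiniteTypeIdeal A)
    (P : ι → A) (hproj : ∀ i, IsProjn (P i)) (hmem : ∀ i, P i ∈ F.carrier)
    (happrox : ∀ x ∈ F.carrier, Filter.Tendsto (fun i => P i * x) Filter.atTop (nhds x))
    (N : Set A) (hN : IsClosedSubmodule N) (pN : A) (hpN : IsOrthProjOnto pN N)
    (hpNF : pN ∈ F.carrier) :
    ∃ (i₀ : ι) (M : Set A), IsClosedSubmodule M ∧ (∀ x : A, x - P i₀ * x ∈ M) ∧
      IsComplPair M N := by
  obtain ⟨hsa, hidem, hNset⟩ := hpN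
  have hne : (Filter.atTop : Filter ι).NeBot :=
    Filter.atTop_neBot_iff.mpr ⟨‹Nonempty ι›, ‹IsDirected ι (· ≤ ·)›⟩
  obtain ⟨i₀, hi₀⟩ := (Metric.tendsto_nhds.mp (happrox pN hpNF) 1 one_pos).exists
  set Q := P i₀ with hQdef
  have hQidem : Q * Q = Q := (hproj i₀).2
  have hpNle : ‖pN‖ ≤ 1 := by
    have h1 : ‖pN‖ * ‖pN‖ = ‖pN‖ := by
      calc ‖pN‖ * ‖pN‖ = ‖star pN * pN‖ := (CStarRing.norm_star_mul_self).symm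
        _ = ‖pN * pN‖ := by rw [hsa.star_eq]
        _ = ‖pN‖ := by rw [hidem]
    nlinarith [norm_nonneg pN]
  set e : A := pN * (1 - Q) * pN with he
  have hnorm : ‖e‖ < 1 := by
    have h2 : e = pN * (pN - Q * pN) := by
      rw [he, mul_assoc, sub_mul, one_mul]
    have h3 : ‖e‖ ≤ ‖pN‖ * ‖pN - Q * pN‖ := h2 ▸ norm_mul_le _ _
    have h4 : ‖pN - Q * pN‖ < 1 := by
      have := hi₀
      rw [dist_eq_norm] at this
      rwa [← norm_neg, neg_sub]
    nlinarith [norm_nonneg (pN - Q * pN)]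
  set b' : A := ↑(Units.oneSub e hnorm)⁻¹ with hb'
  set d : A := 1 - e with hd
  have hdb' : d * b' = 1 := (Units.oneSub e hnorm).mul_inv
  have hb'd : b' * d = 1 := (Units.oneSub e hnorm).inv_mul
  have hpNe : pN * e = e := by
    rw [he, ← mul_assoc, ← mul_assoc, hidem]
  have hepN : e * pN = e := by
    rw [he, mul_assoc, mul_assoc, hidem, ← mul_assoc]
  have hdpN : d * pN = pN - e := by rw [hd, sub_mul, one_mul, hepN]
  have hpNd : pN * d = pN - e := by rw [hd, mul_sub, mul_one, hpNe]
  have hb'pN : b' * pN = pN * b' := by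
    calc b' * pN = b' * pN * (d * b') := by rw [hdb', mul_one]
      _ = b' * (pN * d) * b' := by rw [mul_assoc, ← mul_assoc pN d b', ← mul_assoc]
      _ = b' * (d * pN) * b' := by rw [hpNd, hdpN]
      _ = (b' * d) * (pN * b') := by rw [mul_assoc, mul_assoc, mul_assoc]
      _ = pN * b' := by rw [hb'd, one_mul]
  have hc : pN * Q * pN = pN - e := by
    have h5 : e = pN - pN * Q * pN := by
      rw [he, mul_sub, mul_one, sub_mul, hidem]
    rw [h5, sub_sub_cancel]
  have hcb' : (pN * Q * pN) * b' = pN := by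
    rw [hc, ← hpNd, mul_assoc, hdb', mul_one]
  refine ⟨i₀, {x : A | pN * Q * x = 0}, ⟨?_, ?_, ?_, ?_, ?_, ?_⟩, ?_, ?_, ?_⟩
  · exact isClosed_singleton.preimage (continuous_mul_left (pN * Q))
  · simp [Set.mem_setOf_eq]
  · intro x hx y hy
    simp only [Set.mem_setOf_eq] at *
    rw [mul_add, hx, hy, add_zero]
  · intro x hx a
    simp only [Set.mem_setOf_eq] at *
    rw [← mul_assoc, hx, zero_mul]
  · intro x hx
    simp only [Set.mem_setOf_eq] at *
    rw [mul_neg, hx, neg_zero]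
  · intro x hx c
    simp only [Set.mem_setOf_eq] at *
    rw [mul_smul_comm, hx, smul_zero]
  · intro x
    simp only [Set.mem_setOf_eq, ← hQdef]
    rw [mul_sub, ← mul_assoc (pN * Q) Q x, mul_assoc pN Q Q, hQidem, sub_self]
  · rintro x ⟨hxM, hxN⟩
    simp only [Set.mem_setOf_eq] at hxM
    rw [hNset, Set.mem_setOf_eq] at hxN
    have hcx : (pN * Q * pN) * x = 0 := by
      rw [mul_assoc, hxN, hxM]
    have : pN * x = 0 := by
      calc pN * x = (b' * d) * (pN * x) := by rw [hb'd, one_mul]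
        _ = b' * ((d * pN) * x) := by rw [mul_assoc, ← mul_assoc d pN x]
        _ = b' * ((pN * Q * pN) * x) := by rw [hdpN, ← hc]
        _ = 0 := by rw [hcx, mul_zero]
    have hx0 : x = 0 := by rw [← hxN]; exact this
    simp [hx0]
  · intro x
    set n : A := b' * (pN * Q * x) with hn
    have hpNn : pN * n = n := by
      rw [hn, ← mul_assoc, ← hb'pN, mul_assoc]
      congr 1
      rw [mul_assoc pN Q x, ← mul_assoc pN pN, hidem]
    have hkey : pN * Q * n = pN * Q * x := by
      calc pN * Q * n = (pN * Q * pN) * n := by rw [mul_assoc (pN * Q) pN n, hpNn]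
        _ = ((pN * Q * pN) * b') * (pN * Q * x) := by rw [hn, ← mul_assoc]
        _ = pN * (pN * Q * x) := by rw [hcb']
        _ = pN * Q * x := by rw [mul_assoc pN Q x, ← mul_assoc pN pN, hidem]
    refine ⟨x - n, ?_, n, ?_, by abel⟩
    · simp only [Set.mem_setOf_eq]
      rw [mul_sub, hkey, sub_self]
    · rw [hNset, Set.mem_setOf_eq]; exact hpNn
end

section
/- Let A be a unital C*-algebra with an ideal F of finite type elements, N a closed orthogonally complementable submodule of A with P_N ∈ F, and F₀ ∈ B(A) an adjointable operator whose restriction to N is an isomorphism onto its image. Then F₀(N) is orthogonally complementable in A, the orthogonal projection P_{F₀(N)} belongs to F, and moreover P_N ∼ P_{F₀(N)} (Murray–von Neumann equivalence). -/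
section Aux

open StarAlgebra in
private lemma commute_cfc_aux7 {A : Type*} [CStarAlgebra A] {a b : A} (hab : Commute b a)
    (hab' : Commute b (star a)) {y : A} (hy : y ∈ elemental ℂ a) : Commute b y := by
  induction hy using elemental.induction_on with
  | self => exact hab
  | star_self => exact hab'
  | algebraMap r => exact Algebra.commute_algebraMap_right r b
  | add u hu v hv pu pv => exact pu.add_right pv
  | mul u hu v hv pu pv => exact pu.mul_right pv
  | closure s hs hP v hv =>
      have hcl : IsClosed {x : A | b * x = x * b} :=
        isClosed_eq (by fun_prop) (by fun_prop)
      exact closure_minimal (fun u hu => hP u hu) hcl hv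

private lemma commute_cfc7 {A : Type*} [CStarAlgebra A] {a b : A} (ha : IsSelfAdjoint a)
    (hab : Commute b a) (f : ℝ → ℝ) : Commute b (cfc f a) := by
  rw [cfc_real_eq_complex f ha]
  refine cfc_cases (fun x => Commute b x) a _ (Commute.zero_right b) fun hf hn => ?_
  rw [cfcHom_eq_of_isStarNormal]
  exact commute_cfc_aux7 hab (by rwa [ha.star_eq]) (Subtype.coe_prop _)

private lemma isUnit_of_bdd_below7 {A : Type*} [CStarAlgebra A] {k : A} (hk : IsSelfAdjoint k)
    {d : ℝ} (hd : 0 < d) (hb : ∀ a : A, d * ‖a‖ ≤ ‖k * a‖) : IsUnit k := by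
  have h0 : (0 : ℝ) ∉ spectrum ℝ k := by
    intro h0
    set f : ℝ → ℝ := fun t => max 0 (1 - |t| / (d / 2)) with hf
    have hfc : Continuous f := by fun_prop
    have h1 : (1 : ℝ) ≤ ‖cfc f k‖ := by
      have := norm_apply_le_norm_cfc f k h0 hfc.continuousOn hk
      simpa [hf, hd.le] using this
    have h2 : cfc (fun t => t * f t) k = k * cfc f k := by
      rw [cfc_mul (fun t : ℝ => t) f k continuousOn_id hfc.continuousOn, cfc_id' ℝ k hk]
    have h3 : ‖k * cfc f k‖ ≤ d / 2 := by
      rw [← h2]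
      refine norm_cfc_le (by linarith) fun x hx => ?_
      have hfx0 : 0 ≤ f x := le_max_left _ _
      have hax : 0 ≤ |x| := abs_nonneg x
      have hd2 : 0 < d / 2 := by linarith
      have hfx1 : f x ≤ 1 := by
        simp only [hf, max_le_iff]
        constructor
        · linarith
        · have : 0 ≤ |x| / (d / 2) := by positivity
          linarith
      rcases le_or_gt |x| (d / 2) with hxd | hxd
      · calc ‖x * f x‖ = |x| * f x := by
              rw [Real.norm_eq_abs, abs_mul, abs_of_nonneg hfx0]
          _ ≤ d / 2 * 1 := by apply mul_le_mul hxd hfx1 hfx0 (by linarith)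
          _ = d / 2 := by ring
      · have hfx : f x = 0 := by
          simp only [hf, max_eq_left_iff]
          rw [sub_nonpos, le_div_iff₀ hd2]
          nlinarith
        simp only [hfx, mul_zero, norm_zero]
        linarith
    have h4 := hb (cfc f k)
    nlinarith
  rw [spectrum.notMem_iff] at h0
  simpa using h0.neg

end Aux

/-- if `N` is closed orthogonally complementable with `P_N ∈ F` and the
restriction of `F₀ ∈ B(A)` to `N` is an isomorphism onto its image, then `F₀(N)` is
orthogonally complementable, `P_{F₀(N)} ∈ F` and `P_N ∼ P_{F₀(N)}`. -/
theorem stmt_7 {A : Type*} [CStarAlgebra A] (F : FiniteTypeIdeal A)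
    (N : Set A) (hN : IsClosedSubmodule N) (pN : A) (hpN : IsOrthProjOnto pN N)
    (hpNF : pN ∈ F.carrier) (F₀ : A)
    (hiso : ∃ c > (0 : ℝ), ∀ x ∈ N, c * ‖x‖ ≤ ‖F₀ * x‖) :
    ∃ q : A, IsOrthProjOnto q (imageOf F₀ N) ∧ q ∈ F.carrier ∧ MvN pN q := by
  letI := CStarAlgebra.spectralOrder A
  haveI := CStarAlgebra.spectralOrderedRing A
  obtain ⟨hpNsa, hppN, hNeq⟩ := hpN
  obtain ⟨c, hc, hbd⟩ := hiso
  have hsp : star pN = pN := hpNsa.star_eq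
  have hpp : ∀ x : A, pN * (pN * x) = pN * x := fun x => by rw [← mul_assoc, hppN]
  obtain ⟨T, hTdef⟩ : ∃ T : A, T = F₀ * pN := ⟨_, rfl⟩
  have hTp : T * pN = T := by rw [hTdef, mul_assoc, hppN]
  have hsT : star T = pN * star F₀ := by rw [hTdef, star_mul, hsp]
  have hpsT : pN * star T = star T := by rw [hsT, ← mul_assoc, hppN]
  obtain ⟨h, hhdef⟩ : ∃ h : A, h = star T * T := ⟨_, rfl⟩
  have hhsa : IsSelfAdjoint h := by rw [hhdef]; exact IsSelfAdjoint.star_mul_self T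
  have hph : pN * h = h := by rw [hhdef, ← mul_assoc, hpsT]
  have hhp : h * pN = h := by rw [hhdef, mul_assoc, hTp]
  have hsTT : ∀ x : A, star T * (T * x) = h * x := fun x => by rw [hhdef, mul_assoc]
  have hTx : ∀ x : A, pN * x = x → T * x = F₀ * x := by
    intro x hx
    rw [hTdef, mul_assoc, hx]
  have hhx : ∀ x : A, pN * x = x → h * x = star T * (F₀ * x) := by
    intro x hx
    rw [hhdef, mul_assoc, hTx x hx]
  obtain ⟨k, hkdef⟩ : ∃ k : A, k = h + (1 - pN) := ⟨_, rfl⟩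
  have hksa : IsSelfAdjoint k := by rw [hkdef]; exact hhsa.add ((IsSelfAdjoint.one (R := A)).sub hpNsa)
  have key1 : ∀ x : A, pN * x = x → c^2 * ‖x‖ ≤ ‖h * x‖ := by
    intro x hx
    rcases eq_or_ne x 0 with rfl | hx0
    · simp
    have hxN : x ∈ N := by rw [hNeq]; exact hx
    have h1 : c * ‖x‖ ≤ ‖F₀ * x‖ := hbd x hxN
    have hsx : star x * pN = star x := by rw [← hsp, ← star_mul, hx]
    have h2 : star x * (h * x) = star (F₀ * x) * (F₀ * x) := by
      calc star x * (h * x) = star x * (star T * (F₀ * x)) := by rw [hhx x hx]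
        _ = (star x * pN) * (star F₀ * (F₀ * x)) := by rw [hsT]; simp only [mul_assoc]
        _ = star x * (star F₀ * (F₀ * x)) := by rw [hsx]
        _ = star (F₀ * x) * (F₀ * x) := by rw [star_mul]; simp only [mul_assoc]
    have h3 : ‖F₀ * x‖ * ‖F₀ * x‖ = ‖star x * (h * x)‖ := by
      rw [← CStarRing.norm_star_mul_self, ← h2]
    have h4 : ‖star x * (h * x)‖ ≤ ‖x‖ * ‖h * x‖ := by
      calc ‖star x * (h * x)‖ ≤ ‖star x‖ * ‖h * x‖ := norm_mul_le _ _
        _ = ‖x‖ * ‖h * x‖ := by rw [norm_star]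
    have hx0' : 0 < ‖x‖ := norm_pos_iff.mpr hx0
    nlinarith [norm_nonneg (F₀ * x), norm_nonneg (h * x),
      mul_le_mul h1 h1 (by positivity) (norm_nonneg (F₀ * x))]
  have hc2 : (0:ℝ) < c^2 := by positivity
  have key2 : ∀ a : A, ‖a‖ ≤ (1 / c^2 + 1) * ‖k * a‖ := by
    intro a
    obtain ⟨x, hxdef⟩ : ∃ x : A, x = pN * a := ⟨_, rfl⟩
    obtain ⟨z, hzdef⟩ : ∃ z : A, z = a - pN * a := ⟨_, rfl⟩
    have hxN : pN * x = x := by rw [hxdef]; exact hpp a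
    have hu : k * a = h * x + z := by
      have h1 : h * x = h * a := by rw [hxdef, ← mul_assoc, hhp]
      rw [hkdef, add_mul, sub_mul, one_mul, h1, hzdef]
    obtain ⟨u, hudef⟩ : ∃ u : A, u = h * x := ⟨_, rfl⟩
    have hpu : pN * u = u := by rw [hudef, ← mul_assoc, hph]
    have hupN : star u * pN = star u := by rw [← hsp, ← star_mul, hpu]
    have hcross1 : star u * z = 0 := by
      rw [hzdef, mul_sub, ← mul_assoc, hupN, sub_self]
    have hcross2 : star z * u = 0 := by
      rw [hzdef, star_sub, sub_mul, star_mul, hsp, mul_assoc, hpu, sub_self]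
    have hexp : star (k * a) * (k * a) = star u * u + star z * z := by
      rw [hu, ← hudef, star_add, add_mul, mul_add, mul_add, hcross1, hcross2, add_zero, zero_add]
    have hKnn := norm_nonneg (k * a)
    have h5 : ‖u‖ ≤ ‖k * a‖ := by
      have hle : ‖star u * u‖ ≤ ‖star (k*a) * (k*a)‖ := by
        rw [hexp]
        exact CStarAlgebra.norm_le_norm_of_nonneg_of_le (star_mul_self_nonneg u)
          (le_add_of_nonneg_right (star_mul_self_nonneg z))
      rw [CStarRing.norm_star_mul_self, CStarRing.norm_star_mul_self] at hle
      nlinarith [norm_nonneg u]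
    have h6 : ‖z‖ ≤ ‖k * a‖ := by
      have hle : ‖star z * z‖ ≤ ‖star (k*a) * (k*a)‖ := by
        rw [hexp]
        exact CStarAlgebra.norm_le_norm_of_nonneg_of_le (star_mul_self_nonneg z)
          (le_add_of_nonneg_left (star_mul_self_nonneg u))
      rw [CStarRing.norm_star_mul_self, CStarRing.norm_star_mul_self] at hle
      nlinarith [norm_nonneg z]
    have h7 : c^2 * ‖x‖ ≤ ‖u‖ := by rw [hudef]; exact key1 x hxN
    have h8 : ‖a‖ ≤ ‖x‖ + ‖z‖ := by
      calc ‖a‖ = ‖x + z‖ := by rw [hxdef, hzdef]; congr 1; abel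
        _ ≤ ‖x‖ + ‖z‖ := norm_add_le _ _
    have h9 : ‖x‖ ≤ 1 / c^2 * ‖k * a‖ := by
      rw [div_mul_eq_mul_div, le_div_iff₀ hc2, mul_comm (‖x‖) (c^2)]
      calc c^2 * ‖x‖ ≤ ‖u‖ := h7
        _ ≤ ‖k * a‖ := h5
        _ = 1 * ‖k * a‖ := (one_mul _).symm
    have h10 : (1 / c^2 + 1) * ‖k * a‖ = 1 / c^2 * ‖k * a‖ + ‖k * a‖ := by ring
    linarith
  obtain ⟨d, hddef⟩ : ∃ d : ℝ, d = (1 / c^2 + 1)⁻¹ := ⟨_, rfl⟩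
  have he : (0:ℝ) < 1 / c^2 + 1 := by positivity
  have hd : 0 < d := by rw [hddef]; positivity
  have hbk : ∀ a : A, d * ‖a‖ ≤ ‖k * a‖ := by
    intro a
    calc d * ‖a‖ ≤ d * ((1 / c^2 + 1) * ‖k * a‖) :=
          mul_le_mul_of_nonneg_left (key2 a) hd.le
      _ = ‖k * a‖ := by rw [hddef, ← mul_assoc, inv_mul_cancel₀ he.ne', one_mul]
  obtain ⟨U, hU⟩ := isUnit_of_bdd_below7 hksa hd hbk
  obtain ⟨j, hjdef⟩ : ∃ j : A, j = ↑U⁻¹ := ⟨_, rfl⟩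
  have hjk : j * k = 1 := by rw [hjdef, ← hU]; exact U.inv_mul
  have hkj : k * j = 1 := by rw [hjdef, ← hU]; exact U.mul_inv
  have hpk : pN * k = h := by
    rw [hkdef, mul_add, hph, mul_sub, mul_one, hppN, sub_self, add_zero]
  have hkp : k * pN = h := by
    rw [hkdef, add_mul, hhp, sub_mul, one_mul, hppN, sub_self, add_zero]
  have hcomm : pN * j = j * pN := by
    have h1 : Commute pN (↑U : A) := by
      show pN * ↑U = ↑U * pN
      rw [hU, hpk, hkp]
    rw [hjdef]
    exact h1.units_inv_right
  have hjsk : star j * k = 1 := by rw [← hksa.star_eq, ← star_mul, hkj, star_one]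
  have hjsa : IsSelfAdjoint j := by
    show star j = j
    calc star j = star j * (k * j) := by rw [hkj, mul_one]
      _ = (star j * k) * j := by rw [mul_assoc]
      _ = j := by rw [hjsk, one_mul]
  obtain ⟨g, hgdef⟩ : ∃ g : A, g = pN * j := ⟨_, rfl⟩
  have hgh : g * h = pN := by
    rw [hgdef, ← hkp, ← mul_assoc, mul_assoc pN j k, hjk, mul_one, hppN]
  have hhg : h * g = pN := by
    rw [hgdef, ← mul_assoc, hhp, ← hpk, mul_assoc, hkj, mul_one]
  have hpg : pN * g = g := by rw [hgdef, ← mul_assoc, hppN]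
  have hgp : g * pN = g := by rw [hgdef, mul_assoc, ← hcomm, ← mul_assoc, hppN]
  have hgsa : IsSelfAdjoint g := by
    show star g = g
    rw [hgdef, star_mul, hjsa.star_eq, hsp, ← hcomm]
  have hk0 : (0:A) ≤ k := by
    rw [hkdef, hhdef]
    refine add_nonneg (star_mul_self_nonneg T) ?_
    have hq1 : (1 - pN) * (1 - pN) = 1 - pN := by
      rw [mul_sub, sub_mul, sub_mul, one_mul, mul_one, one_mul, hppN]
      abel
    calc (0:A) ≤ star (1 - pN) * (1 - pN) := star_mul_self_nonneg _
      _ = 1 - pN := by rw [star_sub, star_one, hsp, hq1]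
  have hj0 : (0:A) ≤ j := by
    have h1 : (0:A) ≤ star j * k * j := star_left_conjugate_nonneg hk0 j
    have h2 : star j * k * j = j := by rw [hjsk, one_mul]
    rwa [h2] at h1
  have hg0 : (0:A) ≤ g := by
    have h1 : (0:A) ≤ star pN * j * pN := star_left_conjugate_nonneg hj0 pN
    have h2 : star pN * j * pN = g := by
      rw [hsp, hgdef, mul_assoc, ← hcomm, ← mul_assoc, hppN]
    rwa [h2] at h1
  obtain ⟨r, hrdef⟩ : ∃ r : A, r = cfc Real.sqrt g := ⟨_, rfl⟩
  have hrsa : IsSelfAdjoint r := by rw [hrdef]; exact cfc_predicate Real.sqrt g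
  have hrr : r * r = g := by
    rw [hrdef, ← cfc_mul Real.sqrt Real.sqrt g
      Real.continuous_sqrt.continuousOn Real.continuous_sqrt.continuousOn]
    rw [cfc_congr (g := fun x : ℝ => x)
      (fun x hx => Real.mul_self_sqrt (spectrum_nonneg_of_nonneg hg0 hx)), cfc_id' ℝ g hgsa]
  have hcg : Commute h g := by
    show h * g = g * h
    rw [hhg, hgh]
  have hrh : h * r = r * h := by rw [hrdef]; exact (commute_cfc7 hgsa hcg Real.sqrt).eq
  obtain ⟨v, hvdef⟩ : ∃ v : A, v = T * r := ⟨_, rfl⟩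
  have hvv : star v * v = pN := by
    rw [hvdef, star_mul, hrsa.star_eq]
    calc r * star T * (T * r) = r * (h * r) := by rw [mul_assoc, hsTT]
      _ = r * r * h := by rw [hrh, ← mul_assoc]
      _ = pN := by rw [hrr, hgh]
  obtain ⟨q, hqdef⟩ : ∃ q : A, q = T * g * star T := ⟨_, rfl⟩
  have hvsv : v * star v = q := by
    rw [hvdef, star_mul, hrsa.star_eq, hqdef, ← hrr]
    simp only [mul_assoc]
  have hqq : q * q = q := by
    have h1 : g * (h * (g * star T)) = g * star T := by
      rw [← mul_assoc, ← mul_assoc, mul_assoc g h g, hhg, hgp]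
    calc q * q = T * (g * (star T * (T * (g * star T)))) := by
          simp only [hqdef, mul_assoc]
      _ = T * (g * (h * (g * star T))) := by rw [hsTT]
      _ = T * (g * star T) := by rw [h1]
      _ = q := by simp only [hqdef, mul_assoc]
  have hqsa : IsSelfAdjoint q := by
    rw [← hvsv]
    exact IsSelfAdjoint.mul_star_self v
  have hqmem : q ∈ F.carrier := by
    have h1 : g ∈ F.carrier := by rw [hgdef]; exact F.mul_right_mem j hpNF
    rw [hqdef]
    exact F.mul_right_mem (star T) (F.mul_left_mem T h1)
  refine ⟨q, ⟨hqsa, hqq, ?_⟩, hqmem, ⟨v, hvsv, hvv⟩⟩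
  ext y
  simp only [imageOf, Set.mem_setOf_eq]
  constructor
  · rintro ⟨x, hxN, rfl⟩
    have hx : pN * x = x := by rw [hNeq] at hxN; exact hxN
    calc q * (F₀ * x) = T * (g * (star T * (F₀ * x))) := by simp only [hqdef, mul_assoc]
      _ = T * (g * (h * x)) := by rw [← hhx x hx]
      _ = T * (pN * x) := by rw [← mul_assoc g h, hgh]
      _ = F₀ * x := by rw [hx, hTdef, mul_assoc, hx]
  · intro hy
    refine ⟨pN * (g * (star T * y)), ?_, ?_⟩
    · rw [hNeq]; exact hpp _
    · calc y = q * y := hy.symm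
        _ = T * (g * (star T * y)) := by simp only [hqdef, mul_assoc]
        _ = F₀ * (pN * (g * (star T * y))) := by rw [hTdef, mul_assoc]
end

section
/- Let A be a unital C*-algebra with ideal F of finite type elements, and let M, N be closed orthogonally complementable submodules of A with P_M, P_N ∈ F, M ∩ N = {0}, and M + N closed and complementable in A. Then P_{M ⊕̃ N} ∈ F and in the K-group K(F) one has [P_{M ⊕̃ N}] = [P_M] + [P_N]. -/
section AuxLemmas
variable {A : Type*} [CStarAlgebra A]


theorem invsqrt_exists (T q X : A) (hq : IsSelfAdjoint q) (hq2 : q * q = q)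
    (hXdef : X = star T * T + (1 - q)) (hTq : star T * T * (1 - q) = 0)
    (hns : (0:ℝ) ∉ spectrum ℝ X) :
    ∃ R : A, IsSelfAdjoint R ∧ R * X * R = 1 ∧ R * R * X = 1 ∧ X * (R * R) = 1 ∧
      R * (1 - q) = 1 - q ∧ (1 - q) * R = 1 - q := by
  letI : PartialOrder A := CStarAlgebra.spectralOrder A
  haveI : StarOrderedRing A := CStarAlgebra.spectralOrderedRing A
  have h1q : IsSelfAdjoint (1 - q) := (IsSelfAdjoint.one A).sub hq
  have hX : IsSelfAdjoint X := by
    rw [hXdef]; exact (IsSelfAdjoint.star_mul_self T).add h1q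
  have hq1q : (1 - q) * (1 - q) = 1 - q := by noncomm_ring [hq2]
  have h0 : 0 ≤ X := by
    rw [hXdef]
    refine add_nonneg (star_mul_self_nonneg T) ?_
    have : (1 - q) = star (1 - q) * (1 - q) := by rw [h1q.star_eq, hq1q]
    exact this ▸ star_mul_self_nonneg (1 - q)
  have hsub : spectrum ℝ X ⊆ Set.Ioi 0 := fun t ht =>
    lt_of_le_of_ne (spectrum_nonneg_of_nonneg h0 ht) (fun h => hns (h ▸ ht))
  have hg : ContinuousOn (fun t : ℝ => (Real.sqrt t)⁻¹) (spectrum ℝ X) :=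
    ContinuousOn.inv₀ Real.continuous_sqrt.continuousOn
      (fun t ht => ne_of_gt (Real.sqrt_pos.mpr (hsub ht)))
  set g : ℝ → ℝ := fun t : ℝ => (Real.sqrt t)⁻¹ with hgdef
  set R := cfc g X with hRdef
  have e1 : R * R * X = cfc (fun t => g t * g t * t) X := by
    rw [cfc_mul (fun t => g t * g t) (fun t => t) X (hg.mul hg) (by fun_prop),
      cfc_mul g g X hg hg, cfc_id' ℝ X hX]
  have e2 : X * (R * R) = cfc (fun t => t * (g t * g t)) X := by
    rw [cfc_mul (fun t => t) (fun t => g t * g t) X (by fun_prop) (hg.mul hg),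
      cfc_mul g g X hg hg, cfc_id' ℝ X hX]
  have e3 : R * X * R = cfc (fun t => g t * t * g t) X := by
    rw [cfc_mul (fun t => g t * t) g X (hg.mul (by fun_prop)) hg,
      cfc_mul g (fun t => t) X hg (by fun_prop), cfc_id' ℝ X hX]
  have hXq : X * (1 - q) = 1 - q := by
    rw [hXdef, add_mul, hTq, hq1q, zero_add]
  -- the factorization R = 1 - H * (X - 1)
  set h₀ : ℝ → ℝ := fun t => (Real.sqrt t * (Real.sqrt t + 1))⁻¹ with hh₀def
  have hh₀ : ContinuousOn h₀ (spectrum ℝ X) := by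
    apply ContinuousOn.inv₀
    · exact Real.continuous_sqrt.continuousOn.mul
        (Real.continuous_sqrt.continuousOn.add continuousOn_const)
    · intro t ht
      have ht0 : 0 < Real.sqrt t := Real.sqrt_pos.mpr (hsub ht)
      positivity
  have hfact : R = 1 - cfc h₀ X * (X - 1) := by
    have hx1 : cfc (fun t : ℝ => t - 1) X = X - 1 := by
      rw [cfc_sub (fun t : ℝ => t) (fun _ : ℝ => 1) X, cfc_id' ℝ X hX, cfc_const 1 X, map_one]
    rw [← hx1, ← cfc_mul h₀ _ X hh₀ (by fun_prop), ← cfc_one ℝ X,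
      ← cfc_sub (1 : ℝ → ℝ) (fun t => h₀ t * (t - 1)) X]
    apply cfc_congr
    intro t ht
    simp only [Pi.one_apply]
    have ht0 : 0 < t := hsub ht
    have hs0 : 0 < Real.sqrt t := Real.sqrt_pos.mpr ht0
    simp only [hgdef, hh₀def]
    rw [← Real.mul_self_sqrt ht0.le]
    field_simp
    rw [Real.sqrt_sq hs0.le]; ring
  have hRq : R * (1 - q) = 1 - q := by
    rw [hfact, sub_mul, one_mul, mul_assoc, sub_mul, hXq, one_mul, sub_self, mul_zero, sub_zero]
  have hsq : ∀ t ∈ spectrum ℝ X, g t * g t * t = 1 := by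
    intro t ht
    have ht0 : 0 < t := hsub ht
    have hs : Real.sqrt t ≠ 0 := ne_of_gt (Real.sqrt_pos.mpr ht0)
    simp only [hgdef]
    rw [← mul_inv, Real.mul_self_sqrt ht0.le]
    exact inv_mul_cancel₀ (ne_of_gt ht0)
  have hR : IsSelfAdjoint R := IsSelfAdjoint.cfc
  refine ⟨R, hR, ?_, ?_, ?_, hRq, ?_⟩
  · rw [e3, ← cfc_one ℝ X]
    exact cfc_congr fun t ht => by
      simp only [Pi.one_apply]; rw [show g t * t * g t = g t * g t * t from by ring]; exact hsq t ht
  · rw [e1, ← cfc_one ℝ X]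
    exact cfc_congr fun t ht => by simp only [Pi.one_apply]; exact hsq t ht
  · rw [e2, ← cfc_one ℝ X]
    exact cfc_congr fun t ht => by
      simp only [Pi.one_apply]; rw [show t * (g t * g t) = g t * g t * t from by ring]; exact hsq t ht
  · calc (1 - q) * R = star (R * (1 - q)) := by rw [star_mul, hR.star_eq, h1q.star_eq]
    _ = 1 - q := by rw [hRq, h1q.star_eq]


theorem bounded_below_aux (T q p : A)
    (hinj : ∀ z : A, q * z = z → T * z = 0 → z = 0)
    (hrange : ∀ y : A, p * y = y → ∃ z : A, q * z = z ∧ T * z = y)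
    (hmapsto : ∀ z : A, p * (T * z) = T * z) :
    ∃ c > (0 : ℝ), ∀ z : A, q * z = z → c * ‖z‖ ≤ ‖T * z‖ := by
  classical
  set Lq : A →L[ℂ] A := ContinuousLinearMap.mul ℂ A (1 - q) with hLq
  set Lp : A →L[ℂ] A := ContinuousLinearMap.mul ℂ A (1 - p) with hLp
  have hLq_apply : ∀ z : A, Lq z = (1 - q) * z := fun z => rfl
  have hmemq : ∀ z : A, z ∈ Lq.ker ↔ q * z = z := by
    intro z
    rw [LinearMap.mem_ker]
    constructor
    · intro h
      have : (1 - q) * z = 0 := h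
      rw [sub_mul, one_mul, sub_eq_zero] at this
      exact this.symm
    · intro h
      show (1 - q) * z = 0
      rw [sub_mul, one_mul, h, sub_self]
  have hmemp : ∀ z : A, z ∈ Lp.ker ↔ p * z = z := by
    intro z
    rw [LinearMap.mem_ker]
    constructor
    · intro h
      have : (1 - p) * z = 0 := h
      rw [sub_mul, one_mul, sub_eq_zero] at this
      exact this.symm
    · intro h
      show (1 - p) * z = 0
      rw [sub_mul, one_mul, h, sub_self]
  haveI : CompleteSpace Lq.ker := (ContinuousLinearMap.isClosed_ker Lq).completeSpace_coe
  haveI : CompleteSpace Lp.ker := (ContinuousLinearMap.isClosed_ker Lp).completeSpace_coe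
  set f : Lq.ker →L[ℂ] Lp.ker :=
    ContinuousLinearMap.codRestrict
      ((ContinuousLinearMap.mul ℂ A T).comp Lq.ker.subtypeL)
      Lp.ker
      (fun z => (hmemp _).mpr (hmapsto z)) with hf
  have hf_apply : ∀ z : Lq.ker, (f z : A) = T * (z : A) := fun z => rfl
  have hker : f.ker = ⊥ := by
    rw [LinearMap.ker_eq_bot']
    intro z hz
    have h1 : T * (z : A) = 0 := by
      have := congrArg (Subtype.val) hz
      rw [← hf_apply]
      exact this
    have h2 : (z : A) = 0 := hinj _ ((hmemq _).mp z.2) h1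
    exact Subtype.ext h2
  have hrg : f.range = ⊤ := by
    rw [LinearMap.range_eq_top]
    rintro ⟨y, hy⟩
    obtain ⟨z, hz1, hz2⟩ := hrange y ((hmemp _).mp hy)
    exact ⟨⟨z, (hmemq _).mpr hz1⟩, Subtype.ext hz2⟩
  set e := ContinuousLinearEquiv.ofBijective f hker hrg with he
  set es := (e.symm : Lp.ker →L[ℂ] Lq.ker) with hes
  set C : ℝ := ‖es‖ + 1 with hC
  have hCpos : 0 < C := by positivity
  refine ⟨C⁻¹, by positivity, ?_⟩
  intro z hz
  set z' : Lq.ker := ⟨z, (hmemq _).mpr hz⟩ with hz'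
  have h1 : ‖z'‖ ≤ C * ‖e z'‖ := by
    have h0 := es.le_opNorm (e z')
    have h0' : es (e z') = z' := e.symm_apply_apply z'
    rw [h0'] at h0
    refine h0.trans ?_
    apply mul_le_mul_of_nonneg_right _ (norm_nonneg _)
    simp [hC]
  have h2 : ‖z'‖ = ‖z‖ := rfl
  have h4 : ‖e z'‖ = ‖T * z‖ := by
    have : ((e z' : Lp.ker) : A) = T * z := hf_apply z'
    rw [← this]
    rfl
  rw [← h2, ← h4]
  rw [inv_mul_le_iff₀ hCpos]
  exact h1


theorem proj_norm_le_one (q : A) (hsa : IsSelfAdjoint q) (h2 : q * q = q) : ‖q‖ ≤ 1 := by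
  by_cases h : q = 0
  · simp [h]
  · have h1 : ‖q‖ * ‖q‖ = ‖q‖ := by
      conv_rhs => rw [← h2]
      rw [← CStarRing.norm_star_mul_self, hsa.star_eq]
    have h0 : 0 < ‖q‖ := norm_pos_iff.mpr h
    nlinarith

theorem spec_zero_not_mem (T q X : A) (hq : IsSelfAdjoint q) (hq2 : q * q = q)
    (hXdef : X = star T * T + (1 - q)) (δ : ℝ) (hδ : 0 < δ)
    (hlb : ∀ x : A, δ * ‖x‖ ≤ ‖X * x‖) : (0 : ℝ) ∉ spectrum ℝ X := by
  by_cases htriv : (0 : A) = 1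
  · haveI : Subsingleton A := subsingleton_of_zero_eq_one htriv
    rw [spectrum.zero_mem_iff]
    intro h
    exact h (isUnit_of_subsingleton X)
  haveI : Nontrivial A := nontrivial_of_ne 0 1 htriv
  letI : PartialOrder A := CStarAlgebra.spectralOrder A
  haveI : StarOrderedRing A := CStarAlgebra.spectralOrderedRing A
  have h1q : IsSelfAdjoint (1 - q) := (IsSelfAdjoint.one A).sub hq
  have hq1q : (1 - q) * (1 - q) = 1 - q := by noncomm_ring [hq2]
  have hX : IsSelfAdjoint X := by
    rw [hXdef]; exact (IsSelfAdjoint.star_mul_self T).add h1q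
  have h0 : 0 ≤ X := by
    rw [hXdef]
    refine add_nonneg (star_mul_self_nonneg T) ?_
    have : (1 - q) = star (1 - q) * (1 - q) := by rw [h1q.star_eq, hq1q]
    exact this ▸ star_mul_self_nonneg (1 - q)
  intro h0spec
  set K : ℝ := 2 / δ with hK
  have hKpos : 0 < K := by positivity
  set f : ℝ → ℝ := fun t => max 0 (1 - K * t) with hf
  have hfc : Continuous f := continuous_const.max (continuous_const.sub (continuous_const.mul continuous_id))
  set a := cfc f X with ha
  have hXa : X * a = cfc (fun t => t * f t) X := by
    rw [cfc_mul (fun t : ℝ => t) f X (by fun_prop) hfc.continuousOn, cfc_id' ℝ X hX]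
  have hnorm : ‖X * a‖ ≤ δ / 2 := by
    rw [hXa]
    apply norm_cfc_le (by positivity)
    intro t ht
    have ht0 : 0 ≤ t := spectrum_nonneg_of_nonneg h0 ht
    rw [Real.norm_eq_abs, abs_le]
    constructor
    · have : 0 ≤ f t := le_max_left _ _
      nlinarith
    · rcases le_or_gt t (δ/2) with h | h
      · have h1 : f t ≤ 1 := by
          simp only [hf]
          apply max_le (by norm_num)
          nlinarith
        have : 0 ≤ f t := le_max_left _ _
        nlinarith
      · have h1 : f t = 0 := by
          simp only [hf, max_eq_left_iff]
          have : (1:ℝ) ≤ K * t := by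
            rw [hK]
            rw [div_mul_eq_mul_div, le_div_iff₀ hδ]
            nlinarith
          linarith
        rw [h1]
        nlinarith
  have hone : (1:ℝ) ∈ spectrum ℝ a := by
    rw [ha, cfc_map_spectrum f X hX hfc.continuousOn]
    refine ⟨0, h0spec, ?_⟩
    simp [hf]
  have hna : 1 ≤ ‖a‖ := by
    have := spectrum.norm_le_norm_of_mem hone
    simpa using this
  have := hlb a
  have h2 : δ * 1 ≤ δ * ‖a‖ := by nlinarith
  have : δ ≤ δ / 2 := by
    calc δ = δ * 1 := by ring
    _ ≤ δ * ‖a‖ := h2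
    _ ≤ ‖X * a‖ := hlb a
    _ ≤ δ / 2 := hnorm
  linarith

end AuxLemmas

/-- if `M, N` are closed orthogonally complementable submodules with
`P_M, P_N ∈ F`, `M ∩ N = 0` and `M + N` closed and complementable, then
`P_{M ⊕̃ N} ∈ F` and `[P_{M ⊕̃ N}] = [P_M] + [P_N]` in `K(F)`. -/
theorem stmt_8 {A : Type*} [CStarAlgebra A] (F : FiniteTypeIdeal A) (M N : Set A)
    (hM : IsClosedSubmodule M) (hN : IsClosedSubmodule N)
    (pM pN : A) (hpM : IsOrthProjOnto pM M) (hpN : IsOrthProjOnto pN N)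
    (hpMF : pM ∈ F.carrier) (hpNF : pN ∈ F.carrier)
    (hMN : M ∩ N ⊆ {0})
    (hclosed : IsClosed {x : A | ∃ m ∈ M, ∃ n ∈ N, x = m + n})
    (hcompl : ∃ p : A, IsOrthProjOnto p {x : A | ∃ m ∈ M, ∃ n ∈ N, x = m + n}) :
    ∃ p : A, IsOrthProjOnto p {x : A | ∃ m ∈ M, ∃ n ∈ N, x = m + n} ∧
      p ∈ F.carrier ∧ KEqList F.carrier [p] [pM, pN] := by
  classical
  obtain ⟨p, hpsa, hp2, hpS⟩ := hcompl
  obtain ⟨hMsa, hM2, hMeq⟩ := hpM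
  obtain ⟨hNsa, hN2, hNeq⟩ := hpN
  have hMmem : ∀ x : A, x ∈ M ↔ pM * x = x := fun x => by rw [hMeq]; exact Iff.rfl
  have hNmem : ∀ x : A, x ∈ N ↔ pN * x = x := fun x => by rw [hNeq]; exact Iff.rfl
  have hSmem : ∀ x : A, (∃ m ∈ M, ∃ n ∈ N, x = m + n) ↔ p * x = x := fun x => by
    constructor
    · intro hx
      exact (hpS ▸ hx : x ∈ {x : A | p * x = x})
    · intro hx
      exact (hpS ▸ (hx : x ∈ {x : A | p * x = x}) : x ∈ {x : A | ∃ m ∈ M, ∃ n ∈ N, x = m + n})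
  obtain ⟨v, hv1, hv2, hv3⟩ := F.orth_exists pM pN hpMF hpNF ⟨hMsa, hM2⟩ ⟨hNsa, hN2⟩
  set pN' : A := star v * v with hpN'def
  have hpN'sa : IsSelfAdjoint pN' := IsSelfAdjoint.star_mul_self v
  have hMv0 : pM * pN' = 0 := by
    have h := congrArg star hv2
    rwa [star_mul, hMsa.star_eq, hpN'sa.star_eq, star_zero] at h
  have hpN'2 : pN' * pN' = pN' := by
    have h := hv3.2
    rw [add_mul, mul_add, mul_add, hv2, hMv0, hM2, add_zero, zero_add] at h
    exact add_right_cancel h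
  -- partial isometry identities
  have hvsv : v * pN' * star v = pN := by
    rw [hpN'def, ← mul_assoc, mul_assoc (v * star v) v (star v), hv1, hN2]
  have hsvv : star v * pN * v = pN' := by
    rw [← hv1, hpN'def]
    rw [show star v * (v * star v) * v = (star v * v) * (star v * v) by simp only [mul_assoc]]
    exact hpN'2
  have hpNv : pN * v = v := by
    have key : star (v - pN * v) * (v - pN * v) = 0 := by
      rw [star_sub, star_mul, hNsa.star_eq]
      rw [sub_mul, mul_sub, mul_sub]
      rw [← hpN'def]
      rw [show star v * pN * (pN * v) = star v * (pN * pN) * v by simp only [mul_assoc]]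
      rw [hN2, hsvv]
      rw [show star v * (pN * v) = star v * pN * v from (mul_assoc _ _ _).symm, hsvv]
      simp
    have := CStarRing.star_mul_self_eq_zero_iff (v - pN * v) |>.mp key
    rw [sub_eq_zero] at this
    exact this.symm
  have hvq : v * pN' = v := by
    have key : (v - v * pN') * star (v - v * pN') = 0 := by
      rw [star_sub, star_mul, hpN'sa.star_eq]
      rw [sub_mul, mul_sub, mul_sub]
      rw [show v * pN' * (pN' * star v) = v * (pN' * pN') * star v by simp only [mul_assoc]]
      rw [hpN'2, hvsv, hv1]
      rw [show v * (pN' * star v) = v * pN' * star v from (mul_assoc _ _ _).symm, hvsv]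
      simp
    have := CStarRing.mul_star_self_eq_zero_iff (v - v * pN') |>.mp key
    rw [sub_eq_zero] at this
    exact this.symm
  have hvpM : v * pM = 0 := by
    rw [← hvq, mul_assoc, hv2, mul_zero]
  have hpMsv : pM * star v = 0 := by
    have h := congrArg star hvpM
    rwa [star_mul, hMsa.star_eq, star_zero] at h
  have hpN'sv : pN' * star v = star v := by
    have h := congrArg star hvq
    rwa [star_mul, hpN'sa.star_eq] at h
  -- the orthogonal sum projection q and the comparison operator T
  set q : A := pM + pN' with hqdef
  have hqsa : IsSelfAdjoint q := hMsa.add hpN'sa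
  have hq2 : q * q = q := by
    rw [hqdef, add_mul, mul_add, mul_add, hM2, hMv0, hv2, hpN'2, add_zero, zero_add]
  set T : A := pM + v with hTdef
  have hstarT : star T = pM + star v := by rw [hTdef, star_add, hMsa.star_eq]
  have hTq : T * q = T := by
    rw [hTdef, hqdef, add_mul, mul_add, mul_add, hM2, hMv0, hvpM, hvq, add_zero, zero_add]
  have hqsT : q * star T = star T := by
    rw [hstarT, hqdef, add_mul, mul_add, mul_add, hM2, hpMsv, hv2, hpN'sv, add_zero, zero_add]
  have hpabs : ∀ a : A, p * (pM * a) = pM * a := by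
    intro a
    refine (hSmem (pM * a)).mp ⟨pM * a, ?_, 0, ?_, (add_zero _).symm⟩
    · exact (hMmem _).mpr (by rw [← mul_assoc, hM2])
    · exact (hNmem _).mpr (mul_zero pN)
  have hpvabs : ∀ a : A, p * (v * a) = v * a := by
    intro a
    refine (hSmem (v * a)).mp ⟨0, ?_, v * a, ?_, (zero_add _).symm⟩
    · exact (hMmem _).mpr (mul_zero pM)
    · exact (hNmem _).mpr (by rw [← mul_assoc, hpNv])
  have hpT : p * T = T := by
    have h1 : p * pM = pM := by have := hpabs 1; rwa [mul_one] at this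
    have h2 : p * v = v := by have := hpvabs 1; rwa [mul_one] at this
    rw [hTdef, mul_add, h1, h2]
  set X : A := star T * T + (1 - q) with hXdef
  have hTq0 : T * (1 - q) = 0 := by rw [mul_sub, mul_one, hTq, sub_self]
  have hT'q0 : star T * T * (1 - q) = 0 := by rw [mul_assoc, hTq0, mul_zero]
  have hinj : ∀ z : A, q * z = z → T * z = 0 → z = 0 := by
    intro z hz hTz
    rw [hTdef, add_mul] at hTz
    have hmM : pM * z ∈ M := (hMmem _).mpr (by rw [← mul_assoc, hM2])
    have hmneg : pM * z = -(v * z) := eq_neg_of_add_eq_zero_left hTz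
    have hmN : pM * z ∈ N := by
      refine (hNmem _).mpr ?_
      rw [hmneg, mul_neg, ← mul_assoc, hpNv]
    have h0' : pM * z = 0 := Set.mem_singleton_iff.mp (hMN ⟨hmM, hmN⟩)
    have hvz : v * z = 0 := by rw [h0', zero_add] at hTz; exact hTz
    have hpN'z : pN' * z = 0 := by rw [hpN'def, mul_assoc, hvz, mul_zero]
    rw [← hz, hqdef, add_mul, h0', hpN'z, add_zero]
  have hrange : ∀ y : A, p * y = y → ∃ z : A, q * z = z ∧ T * z = y := by
    intro y hy
    obtain ⟨m, hm, n, hn, hy'⟩ := (hSmem y).mpr hy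
    have hmm : pM * m = m := (hMmem m).mp hm
    have hnn : pN * n = n := (hNmem n).mp hn
    refine ⟨m + star v * n, ?_, ?_⟩
    · rw [hqdef, add_mul, mul_add, mul_add]
      rw [show pM * (star v * n) = (pM * star v) * n from (mul_assoc _ _ _).symm, hpMsv, zero_mul]
      rw [show pN' * m = 0 by rw [← hmm, ← mul_assoc, hv2, zero_mul]]
      rw [show pN' * (star v * n) = (pN' * star v) * n from (mul_assoc _ _ _).symm, hpN'sv]
      rw [hmm]
      simp
    · rw [hTdef, add_mul, mul_add, mul_add]
      rw [show pM * (star v * n) = (pM * star v) * n from (mul_assoc _ _ _).symm, hpMsv, zero_mul]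
      rw [show v * m = 0 by rw [← hmm, ← mul_assoc, hvpM, zero_mul]]
      rw [show v * (star v * n) = (v * star v) * n from (mul_assoc _ _ _).symm, hv1, hnn]
      rw [hmm, hy']
      simp
  have hmapsto : ∀ z : A, p * (T * z) = T * z := by
    intro z
    rw [hTdef, add_mul, mul_add, hpabs, hpvabs]
  obtain ⟨c, hc, hTlb⟩ := bounded_below_aux T q p hinj hrange hmapsto
  have hqlb : ∀ u : A, q * u = u → (c * c) * ‖u‖ ≤ ‖star T * T * u‖ := by
    intro u hu
    by_cases h0u : ‖u‖ = 0
    · rw [h0u, mul_zero]; positivity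
    have hu0 : 0 < ‖u‖ := lt_of_le_of_ne (norm_nonneg u) (Ne.symm h0u)
    have h1 : c * ‖u‖ ≤ ‖T * u‖ := hTlb u hu
    have h2 : ‖star (T * u) * (T * u)‖ = ‖T * u‖ * ‖T * u‖ := CStarRing.norm_star_mul_self
    have h3 : star (T * u) * (T * u) = star u * (star T * T * u) := by
      rw [star_mul]; simp only [mul_assoc]
    have h4 : ‖star u * (star T * T * u)‖ ≤ ‖u‖ * ‖star T * T * u‖ := by
      calc ‖star u * (star T * T * u)‖ ≤ ‖star u‖ * ‖star T * T * u‖ := norm_mul_le _ _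
      _ = ‖u‖ * ‖star T * T * u‖ := by rw [norm_star]
    have h5 : (c * ‖u‖) * (c * ‖u‖) ≤ ‖u‖ * ‖star T * T * u‖ := by
      calc (c * ‖u‖) * (c * ‖u‖) ≤ ‖T * u‖ * ‖T * u‖ := by
            apply mul_le_mul h1 h1 (by positivity) (norm_nonneg _)
      _ = ‖star (T * u) * (T * u)‖ := h2.symm
      _ = ‖star u * (star T * T * u)‖ := by rw [h3]
      _ ≤ ‖u‖ * ‖star T * T * u‖ := h4
    nlinarith [h5, hu0]
  have hq1q : (1 - q) * (1 - q) = 1 - q := by noncomm_ring [hq2]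
  have h1qsa : IsSelfAdjoint (1 - q) := (IsSelfAdjoint.one A).sub hqsa
  have hqX : q * X = star T * T := by
    rw [hXdef, mul_add, ← mul_assoc, hqsT, mul_sub, mul_one, hq2, sub_self, add_zero]
  have h1qX : (1 - q) * X = 1 - q := by
    have h0 : (1 - q) * star T = 0 := by rw [sub_mul, one_mul, hqsT, sub_self]
    rw [hXdef, mul_add, ← mul_assoc, h0, zero_mul, hq1q, zero_add]
  have hX2 : star T * T * q = star T * T := by rw [mul_assoc, hTq]
  set δ : ℝ := ((c * c)⁻¹ + 1)⁻¹ with hδdef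
  have hδpos : 0 < δ := by positivity
  have hXlb : ∀ x : A, δ * ‖x‖ ≤ ‖X * x‖ := by
    intro x
    have hq1 : q * (q * x) = q * x := by rw [← mul_assoc, hq2]
    have e1 : star T * T * (q * x) = star T * T * x := by rw [← mul_assoc, hX2]
    have e2 : q * (X * x) = star T * T * x := by rw [← mul_assoc, hqX]
    have e3 : (1 - q) * (X * x) = (1 - q) * x := by rw [← mul_assoc, h1qX]
    have b1 : (c * c) * ‖q * x‖ ≤ ‖star T * T * x‖ := by
      have := hqlb (q * x) hq1
      rwa [e1] at this
    have b2 : ‖star T * T * x‖ ≤ ‖X * x‖ := by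
      rw [← e2]
      calc ‖q * (X * x)‖ ≤ ‖q‖ * ‖X * x‖ := norm_mul_le _ _
      _ ≤ 1 * ‖X * x‖ := mul_le_mul_of_nonneg_right (proj_norm_le_one q hqsa hq2) (norm_nonneg _)
      _ = ‖X * x‖ := one_mul _
    have b3 : ‖(1 - q) * x‖ ≤ ‖X * x‖ := by
      rw [← e3]
      calc ‖(1 - q) * (X * x)‖ ≤ ‖1 - q‖ * ‖X * x‖ := norm_mul_le _ _
      _ ≤ 1 * ‖X * x‖ := mul_le_mul_of_nonneg_right (proj_norm_le_one _ h1qsa hq1q) (norm_nonneg _)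
      _ = ‖X * x‖ := one_mul _
    have b4 : ‖x‖ ≤ ‖q * x‖ + ‖(1 - q) * x‖ := by
      calc ‖x‖ = ‖q * x + (1 - q) * x‖ := by congr 1; noncomm_ring
      _ ≤ ‖q * x‖ + ‖(1 - q) * x‖ := norm_add_le _ _
    have hcc : (0 : ℝ) < c * c := by positivity
    have b5 : ‖q * x‖ ≤ (c * c)⁻¹ * ‖X * x‖ := by
      rw [inv_mul_eq_div, le_div_iff₀ hcc, mul_comm]
      exact b1.trans b2
    have b6 : ‖x‖ ≤ ((c * c)⁻¹ + 1) * ‖X * x‖ := by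
      rw [add_mul, one_mul]
      linarith
    rw [hδdef, inv_mul_le_iff₀ (by positivity)]
    exact b6
  have hns : (0 : ℝ) ∉ spectrum ℝ X := spec_zero_not_mem T q X hqsa hq2 hXdef δ hδpos hXlb
  obtain ⟨R, hRsa, hRXR, hRRX, hXRR, hRq, hqR⟩ := invsqrt_exists T q X hqsa hq2 hXdef hT'q0 hns
  have hsTT : star T * T = X - (1 - q) := by rw [hXdef]; abel
  have K1 : R * (star T * T) * R = q := by
    calc R * (star T * T) * R = R * X * R - R * (1 - q) * R := by rw [hsTT]; noncomm_ring
    _ = 1 - (1 - q) := by rw [hRXR, hRq, hqR]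
    _ = q := sub_sub_cancel 1 q
  set e : A := T * (R * R) * star T with he
  have K2b : ∀ y : A, p * y = y → e * y = y := by
    intro y hy
    obtain ⟨z, hqz, hTz⟩ := hrange y hy
    have h1qz : (1 - q) * z = 0 := by rw [sub_mul, one_mul, hqz, sub_self]
    have hXz : star T * T * z = X * z := by
      rw [hXdef, add_mul, h1qz, add_zero]
    calc e * y = T * (R * R) * (star T * T * z) := by rw [← hTz, he]; simp only [mul_assoc]
    _ = T * (R * R) * (X * z) := by rw [hXz]
    _ = T * (R * R * X) * z := by simp only [mul_assoc]
    _ = T * 1 * z := by rw [hRRX]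
    _ = T * z := by rw [mul_one]
    _ = y := hTz
  have K2c : e * p = p := K2b p hp2
  have K2d : p * e = e := by
    rw [he]
    simp only [← mul_assoc]
    rw [hpT]
  have K2e : star e = e := by
    rw [he]
    simp only [star_mul, star_star, hRsa.star_eq]
    simp only [← mul_assoc]
  have K2 : e = p := by
    have h1 := congrArg star K2c
    rw [star_mul, hpsa.star_eq, K2e, K2d] at h1
    exact h1
  have hvF : v ∈ F.carrier := by rw [← hpNv]; exact F.mul_right_mem v hpNF
  have hTF : T ∈ F.carrier := by rw [hTdef]; exact F.add_mem hpMF hvF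
  have hpF : p ∈ F.carrier := by
    rw [← K2, he, mul_assoc]
    exact F.mul_right_mem (R * R * star T) hTF
  refine ⟨p, ⟨hpsa, hp2, hpS⟩, hpF, ?_⟩
  refine ⟨0, p + (0 + 0), pM + (pN' + (0 + 0)), ⟨by simp [IsSelfAdjoint], by simp⟩, F.zero_mem,
    ?_, ?_, ?_⟩
  · exact OrthSumList.cons ⟨p, by rw [hpsa.star_eq, hp2], by rw [hpsa.star_eq, hp2]⟩
      (OrthSumList.cons ⟨0, by simp, by simp⟩ OrthSumList.nil (by simp)) (by simp)
  · refine OrthSumList.cons ⟨pM, by rw [hMsa.star_eq, hM2], by rw [hMsa.star_eq, hM2]⟩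
      (OrthSumList.cons ⟨star v, ?_, ?_⟩
        (OrthSumList.cons ⟨0, by simp, by simp⟩ OrthSumList.nil (by simp)) (by simp [hpN'2])) ?_
    · rw [star_star, ← hpN'def]
    · rw [star_star]; exact hv1
    · rw [add_zero, add_zero, hMv0]
  · refine ⟨R * star T, ?_, ?_⟩
    · rw [star_mul, star_star, hRsa.star_eq]
      rw [show R * star T * (T * R) = R * (star T * T) * R by simp only [mul_assoc], K1, hqdef]
      rw [add_zero, add_zero]
    · rw [star_mul, star_star, hRsa.star_eq]
      rw [show T * R * (R * star T) = T * (R * R) * star T by simp only [mul_assoc], ← he, K2]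
      rw [add_zero, add_zero]
end

section
/- Let F ∈ B(A) admit a decomposition A = M₁ ⊕̃ N₁ → M₂ ⊕̃ N₂ = A with respect to which F has diagonal matrix diag(F₁, F₄) where F₁ : M₁ → M₂ is an isomorphism. Then with respect to the decomposition A = N₁^⊥ ⊕ N₁ → F(N₁^⊥) ⊕̃ N₂ = A, the operator F again has a diagonal matrix diag(F̃₁, F₄) with F̃₁ : N₁^⊥ → F(N₁^⊥) an isomorphism; in particular A = F(N₁^⊥) ⊕̃ N₂. -/
/-- if `F` is diagonal `diag(F₁,F₄)` with `F₁` an isomorphism with respect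
to `A = M₁ ⊕̃ N₁ → M₂ ⊕̃ N₂ = A`, then with respect to
`A = N₁^⊥ ⊕ N₁ → F(N₁^⊥) ⊕̃ N₂ = A` it is again diagonal with invertible upper corner;
in particular `A = F(N₁^⊥) ⊕̃ N₂`. -/
theorem stmt_9 {A : Type*} [CStarAlgebra A] (F : A) (M1 N1 M2 N2 : Set A)
    (hM1 : IsClosedSubmodule M1) (hN1 : IsClosedSubmodule N1)
    (hM2 : IsClosedSubmodule M2) (hN2 : IsClosedSubmodule N2)
    (h1 : IsComplPair M1 N1) (h2 : IsComplPair M2 N2)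
    (hdiag : IsIsoOn F M1 M2) (hF : ∀ x ∈ N1, F * x ∈ N2) :
    IsComplPair (orthC N1) N1 ∧ IsIsoOn F (orthC N1) (imageOf F (orthC N1)) ∧
      IsComplPair (imageOf F (orthC N1)) N2 := by
  classical
  -- basic closure facts
  obtain ⟨hint1, hdec1⟩ := h1
  obtain ⟨hint2, hdec2⟩ := h2
  -- components of 1 for the first decomposition
  obtain ⟨m0, hm0, e, he, h1e⟩ := hdec1 1
  obtain ⟨f, hfM2, n0, hn0, h2f⟩ := hdec2 1
  -- uniqueness of decompositions
  have huniqN : ∀ a ∈ M1, ∀ b ∈ N1, ∀ a' ∈ M1, ∀ b' ∈ N1, a + b = a' + b' → b = b' := by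
    intro a ha b hb a' ha' b' hb' heq
    have hmem : b' - b ∈ M1 ∩ N1 := by
      constructor
      · have h' : b' - b = a - a' := by
          rw [sub_eq_sub_iff_add_eq_add, heq, add_comm]
        rw [h', sub_eq_add_neg]
        exact hM1.2.2.1 a ha (-a') (hM1.2.2.2.2.1 a' ha')
      · rw [sub_eq_add_neg]
        exact hN1.2.2.1 b' hb' (-b) (hN1.2.2.2.2.1 b hb)
    have := hint1 hmem
    simp only [Set.mem_singleton_iff, sub_eq_zero] at this
    exact this.symm
  have huniqM : ∀ a ∈ M2, ∀ b ∈ N2, ∀ a' ∈ M2, ∀ b' ∈ N2, a + b = a' + b' → a = a' := by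
    intro a ha b hb a' ha' b' hb' heq
    have hmem : a - a' ∈ M2 ∩ N2 := by
      constructor
      · rw [sub_eq_add_neg]
        exact hM2.2.2.1 a ha (-a') (hM2.2.2.2.2.1 a' ha')
      · have h' : a - a' = b' - b := by
          rw [sub_eq_sub_iff_add_eq_add, heq, add_comm]
        rw [h', sub_eq_add_neg]
        exact hN2.2.2.1 b' hb' (-b) (hN2.2.2.2.2.1 b hb)
    have := hint2 hmem
    simpa [sub_eq_zero] using this
  -- action of e
  have eN : ∀ x ∈ N1, e * x = x := by
    intro x hx
    have hxd : m0 * x + e * x = 0 + x := by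
      rw [zero_add, ← add_mul, ← h1e, one_mul]
    exact huniqN (m0 * x) (hM1.2.2.2.1 m0 hm0 x) (e * x) (hN1.2.2.2.1 e he x)
      0 hM1.2.1 x hx hxd
  have eM : ∀ x ∈ M1, e * x = 0 := by
    intro x hx
    have hxd : m0 * x + e * x = x + 0 := by
      rw [add_zero, ← add_mul, ← h1e, one_mul]
    exact huniqN (m0 * x) (hM1.2.2.2.1 m0 hm0 x) (e * x) (hN1.2.2.2.1 e he x)
      x hx 0 hN1.2.1 hxd
  -- action of f
  have fM2 : ∀ y ∈ M2, f * y = y := by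
    intro y hy
    have hyd : f * y + n0 * y = y + 0 := by
      rw [add_zero, ← add_mul, ← h2f, one_mul]
    exact huniqM (f * y) (hM2.2.2.2.1 f hfM2 y) (n0 * y) (hN2.2.2.2.1 n0 hn0 y)
      y hy 0 hN2.2.1 hyd
  have fN2 : ∀ y ∈ N2, f * y = 0 := by
    intro y hy
    have hyd : f * y + n0 * y = 0 + y := by
      rw [zero_add, ← add_mul, ← h2f, one_mul]
    exact huniqM (f * y) (hM2.2.2.2.1 f hfM2 y) (n0 * y) (hN2.2.2.2.1 n0 hn0 y)
      0 hM2.2.1 y hy hyd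
  have ee : e * e = e := eN e he
  have see : star e * star e = star e := by
    have := congrArg star ee
    simpa [star_mul] using this
  have ee' : ∀ x : A, e * (e * x) = e * x := fun x => by rw [← mul_assoc, ee]
  have see' : ∀ x : A, star e * (star e * x) = star e * x := fun x => by rw [← mul_assoc, see]
  -- the invertible element z
  set z : A := 1 + (e - star e) * star (e - star e) with hzdef
  have hzu : IsUnit z := by
    have hnn := spectrum_star_mul_self_nonneg (A := A) (b := star (e - star e))
    rw [star_star] at hnn
    have hns : (-1 : ℝ) ∉ spectrum ℝ ((e - star e) * star (e - star e)) := by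
      intro hmem
      linarith [hnn _ hmem]
    rw [spectrum.notMem_iff] at hns
    have heqz : (algebraMap ℝ A) (-1) - (e - star e) * star (e - star e) = -z := by
      rw [hzdef, map_neg, map_one]
      noncomm_ring
    rw [heqz, IsUnit.neg_iff] at hns
    exact hns
  obtain ⟨u, hu⟩ := hzu
  set w : A := ↑u⁻¹ with hwdef
  have zw : z * w = 1 := by rw [← hu, hwdef]; exact u.mul_inv
  have wz : w * z = 1 := by rw [← hu, hwdef]; exact u.inv_mul
  have hzsimp : z = 1 - e - star e + e * star e + star e * e := by
    rw [hzdef]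
    have h0 : (e - star e) * star (e - star e)
        = e * star e - e * e - star e * star e + star e * e := by
      simp only [star_sub, star_star]
      noncomm_ring
    rw [h0, ee, see]
    noncomm_ring
  have hze : z * e = e * z := by
    rw [hzsimp]
    simp only [sub_mul, mul_sub, add_mul, mul_add, one_mul, mul_one, mul_assoc, ee, see, ee', see']
    abel
  have hzes : z * star e = star e * z := by
    rw [hzsimp]
    simp only [sub_mul, mul_sub, add_mul, mul_add, one_mul, mul_one, mul_assoc, ee, see, ee', see']
    abel
  have hzq : z * (e * star e) = (e * star e) * z := by
    calc z * (e * star e) = (z * e) * star e := by rw [mul_assoc]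
      _ = e * (z * star e) := by rw [hze, mul_assoc]
      _ = e * (star e * z) := by rw [hzes]
      _ = (e * star e) * z := by rw [mul_assoc]
  have hwq : w * (e * star e) = (e * star e) * w := by
    calc w * (e * star e) = w * (e * star e) * (z * w) := by rw [zw, mul_one]
      _ = w * ((e * star e) * z) * w := by noncomm_ring
      _ = w * (z * (e * star e)) * w := by rw [hzq]
      _ = (w * z) * ((e * star e) * w) := by noncomm_ring
      _ = (e * star e) * w := by rw [wz, one_mul]
  have hwe : w * e = e * w := by
    calc w * e = w * e * (z * w) := by rw [zw, mul_one]
      _ = w * (e * z) * w := by noncomm_ring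
      _ = w * (z * e) * w := by rw [hze]
      _ = (w * z) * (e * w) := by noncomm_ring
      _ = e * w := by rw [wz, one_mul]
  have hzsa : star z = z := by
    rw [hzdef]
    simp [star_add, star_mul, star_sub, star_star, star_one]
  have hwsa : star w = w := by
    have h1' : star w * z = 1 := by
      have := congrArg star zw
      simpa [star_mul, hzsa] using this
    calc star w = star w * (z * w) := by rw [zw, mul_one]
      _ = (star w * z) * w := by rw [mul_assoc]
      _ = w := by rw [h1', one_mul]
  -- the range projection p of the idempotent e
  set p : A := e * star e * w with hpdef
  have pe : p * e = e := by
    have h0 : e * star e * e = z * e := by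
      rw [hzsimp]; simp only [sub_mul, add_mul, one_mul, ee]
      rw [mul_assoc (star e) e e, ee]
      abel
    calc p * e = e * star e * (w * e) := by rw [hpdef, mul_assoc]
      _ = e * star e * (e * w) := by rw [hwe]
      _ = (e * star e * e) * w := (mul_assoc (e * star e) e w).symm
      _ = (z * e) * w := by rw [h0]
      _ = (e * z) * w := by rw [hze]
      _ = e * (z * w) := by rw [mul_assoc]
      _ = e := by rw [zw, mul_one]
  have ep : e * p = p := by
    rw [hpdef, ← mul_assoc, ← mul_assoc, ee]
  have pp : p * p = p := by
    calc p * p = (p * e) * (star e * w) := by rw [hpdef]; noncomm_ring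
      _ = e * (star e * w) := by rw [pe]
      _ = p := by rw [hpdef, mul_assoc]
  have psa : star p = p := by
    calc star p = star w * (star (star e) * star e) := by
          rw [hpdef]; simp [star_mul, mul_assoc]
      _ = w * (e * star e) := by rw [hwsa, star_star]
      _ = (e * star e) * w := hwq
      _ = p := by rw [hpdef]
  -- membership characterizations
  have memN1 : ∀ x : A, x ∈ N1 ↔ e * x = x := by
    intro x
    constructor
    · exact eN x
    · intro hx; rw [← hx]; exact hN1.2.2.2.1 e he x
  have hpN1 : p ∈ N1 := (memN1 p).2 ep
  have pN : ∀ x ∈ N1, p * x = x := by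
    intro x hx
    have hex := eN x hx
    calc p * x = p * (e * x) := by rw [hex]
      _ = (p * e) * x := (mul_assoc p e x).symm
      _ = e * x := by rw [pe]
      _ = x := hex
  have horth : ∀ x : A, x ∈ orthC N1 ↔ p * x = 0 := by
    intro x
    constructor
    · intro hx
      have := hx p hpN1
      rwa [psa] at this
    · intro hpx y hy
      have hy' : star y = star y * p := by
        conv_lhs => rw [← pN y hy]
        rw [star_mul, psa]
      rw [hy', mul_assoc, hpx, mul_zero]
  -- norm of the projection 1 - p
  have hnormp : ‖(1 : A) - p‖ ≤ 1 := by
    set q : A := 1 - p with hq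
    have hqq : q * q = q := by rw [hq]; simp [mul_sub, sub_mul, pp]
    have hqsa : star q = q := by rw [hq]; simp [star_sub, psa]
    have h0 : ‖q‖ * ‖q‖ = ‖q‖ := by
      rw [← CStarRing.norm_star_mul_self (x := q), hqsa, hqq]
    nlinarith [norm_nonneg q]
  -- key decomposition for elements of the orthogonal complement
  have key : ∀ x : A, p * x = 0 → ∃ m' ∈ M1, (1 - p) * m' = x ∧ f * (F * x) = F * m' := by
    intro x hpx
    obtain ⟨m', hm', n', hn', hx'⟩ := hdec1 x
    have hen' : e * x = n' := by
      rw [hx', mul_add, eM m' hm', eN n' hn', zero_add]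
    have hm'eq : m' = (1 - e) * x := by
      rw [sub_mul, one_mul, hen', hx']; abel
    refine ⟨m', hm', ?_, ?_⟩
    · have h0 : (1 - p) * (1 - e) = 1 - p := by
        simp only [mul_sub, sub_mul, one_mul, mul_one, pe]
        abel
      calc (1 - p) * m' = ((1 - p) * (1 - e)) * x := by rw [hm'eq, mul_assoc]
        _ = (1 - p) * x := by rw [h0]
        _ = x := by rw [sub_mul, one_mul, hpx, sub_zero]
    · have hFx : F * x = F * m' + F * n' := by rw [hx', mul_add]
      rw [hFx, mul_add, fM2 (F * m') (hdiag.1 m' hm'), fN2 (F * n') (hF n' hn'), add_zero]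
  obtain ⟨hmap, hsurj, c, hc, hlow⟩ := hdiag
  -- Goal 1
  have goal1 : IsComplPair (orthC N1) N1 := by
    constructor
    · intro x hx
      have h0 := (horth x).1 hx.1
      have h1' := pN x hx.2
      simp only [Set.mem_singleton_iff]
      rw [← h1', h0]
    · intro x
      refine ⟨(1 - p) * x, ?_, p * x, hN1.2.2.2.1 p hpN1 x, by noncomm_ring⟩
      rw [horth]
      calc p * ((1 - p) * x) = (p - p * p) * x := by noncomm_ring
        _ = 0 := by rw [pp, sub_self, zero_mul]
  -- Goal 2
  have goal2 : IsIsoOn F (orthC N1) (imageOf F (orthC N1)) := by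
    refine ⟨fun x hx => ⟨x, hx, rfl⟩, fun y hy => ?_, c / (‖f‖ + 1), by positivity, ?_⟩
    · obtain ⟨x, hx, hy⟩ := hy
      exact ⟨x, hx, hy.symm⟩
    · intro x hx
      obtain ⟨m', hm', hxm, hfm⟩ := key x ((horth x).1 hx)
      have hxnorm : ‖x‖ ≤ ‖m'‖ := by
        calc ‖x‖ = ‖(1 - p) * m'‖ := by rw [hxm]
          _ ≤ ‖(1 : A) - p‖ * ‖m'‖ := norm_mul_le _ _
          _ ≤ 1 * ‖m'‖ := by
              apply mul_le_mul_of_nonneg_right hnormp (norm_nonneg _)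
          _ = ‖m'‖ := one_mul _
      have hFm : ‖F * m'‖ ≤ (‖f‖ + 1) * ‖F * x‖ := by
        calc ‖F * m'‖ = ‖f * (F * x)‖ := by rw [hfm]
          _ ≤ ‖f‖ * ‖F * x‖ := norm_mul_le _ _
          _ ≤ (‖f‖ + 1) * ‖F * x‖ := by
              apply mul_le_mul_of_nonneg_right _ (norm_nonneg _)
              linarith
      have hlow' := hlow m' hm'
      have hfpos : (0 : ℝ) < ‖f‖ + 1 := by positivity
      rw [div_mul_eq_mul_div, div_le_iff₀ hfpos]
      calc c * ‖x‖ ≤ c * ‖m'‖ := by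
            apply mul_le_mul_of_nonneg_left hxnorm (le_of_lt hc)
        _ ≤ ‖F * m'‖ := hlow'
        _ ≤ (‖f‖ + 1) * ‖F * x‖ := hFm
        _ = ‖F * x‖ * (‖f‖ + 1) := by ring
  -- Goal 3
  refine ⟨goal1, goal2, ?_, ?_⟩
  · intro y hy
    obtain ⟨⟨x, hx, hyx⟩, hyN2⟩ := hy
    obtain ⟨m', hm', hxm, hfm⟩ := key x ((horth x).1 hx)
    have hFm0 : F * m' = 0 := by
      rw [← hfm, ← hyx, fN2 y hyN2]
    have hm'0 : m' = 0 := by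
      have := hlow m' hm'
      rw [hFm0, norm_zero] at this
      have hnm : ‖m'‖ ≤ 0 := by nlinarith
      have := norm_nonneg m'
      have : ‖m'‖ = 0 := le_antisymm hnm (norm_nonneg m')
      exact norm_eq_zero.1 this
    have hx0 : x = 0 := by rw [← hxm, hm'0, mul_zero]
    simp only [Set.mem_singleton_iff]
    rw [hyx, hx0, mul_zero]
  · intro zz
    obtain ⟨a, haM2, b, hbN2, hz⟩ := hdec2 zz
    obtain ⟨m, hmM1, hFm⟩ := hsurj a haM2
    have hpmN1 : p * m ∈ N1 := hN1.2.2.2.1 p hpN1 m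
    refine ⟨F * ((1 - p) * m), ⟨(1 - p) * m, ?_, rfl⟩,
      F * (p * m) + b, hN2.2.2.1 (F * (p * m)) (hF (p * m) hpmN1) b hbN2, ?_⟩
    · rw [horth]
      calc p * ((1 - p) * m) = (p - p * p) * m := by noncomm_ring
        _ = 0 := by rw [pp, sub_self, zero_mul]
    · have h0 : F * ((1 - p) * m) + (F * (p * m) + b) = F * m + b := by noncomm_ring
      rw [h0, hFm, hz]
end

section
/- An adjointable operator F on a unital C*-algebra A (as a Hilbert module over itself) admits a decomposition A = M₁ ⊕̃ N₁ → M₂ ⊕̃ N₂ = A with diagonal matrix diag(F₁, F₄), F₁ an isomorphism, if and only if F is invertible up to a pair of projections (P, Q) with P ∼ P_{N₁} and Q ∼ P_{N₂}. -/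
open Pointwise

section Aux
variable {A : Type*} [CStarAlgebra A]

lemma commute_cfc' {d w : A} (hd : IsSelfAdjoint d) (h : Commute d w) (f : ℝ → ℝ) :
    Commute (cfc f d) w := by
  by_cases hf : ContinuousOn f (spectrum ℝ d)
  · rw [cfc_apply f d hd hf]
    set g₀ : C(spectrum ℝ d, ℝ) := ⟨_, hf.restrict⟩
    have main : ∀ g : C(spectrum ℝ d, ℝ), Commute (cfcHom hd g) w := by
      intro g
      induction g using ContinuousMap.induction_on_of_compact with
      | const r =>
        have : (ContinuousMap.const (spectrum ℝ d) r) = r • (1 : C(spectrum ℝ d, ℝ)) := by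
          ext x; simp
        rw [this, map_smul, map_one]
        exact (Commute.one_left w).smul_left r
      | id =>
        rw [cfcHom_id hd]
        exact h
      | star_id =>
        rw [map_star, cfcHom_id hd, hd.star_eq]
        exact h
      | add f g hf hg =>
        rw [map_add]; exact hf.add_left hg
      | mul f g hf hg =>
        rw [map_mul]; exact hf.mul_left hg
      | frequently f hf =>
        have hc := (cfcHom_isClosedEmbedding hd (R := ℝ)).continuous
        have hcl : IsClosed {g : C(spectrum ℝ d, ℝ) |
            cfcHom hd g * w = w * cfcHom hd g} :=
          isClosed_eq (hc.mul continuous_const) (continuous_const.mul hc)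
        have : f ∈ closure {g : C(spectrum ℝ d, ℝ) | cfcHom hd g * w = w * cfcHom hd g} :=
          mem_closure_iff_frequently.mpr hf
        rwa [hcl.closure_eq] at this
    exact main g₀
  · rw [cfc_apply_of_not_continuousOn d hf]
    exact Commute.zero_left w

lemma one_le_of_mem_spectrum {d c : A} (hd1 : d = 1 + star c * c) {x : ℝ}
    (hx : x ∈ spectrum ℝ d) : 1 ≤ x := by
  have h1 : x - 1 ∈ spectrum ℝ d - ({1} : Set ℝ) := ⟨x, hx, 1, rfl, rfl⟩
  rw [spectrum.sub_singleton_eq] at h1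
  have h2 : d - algebraMap ℝ A 1 = star c * c := by
    rw [hd1]; simp
  rw [h2] at h1
  have := spectrum_star_mul_self_nonneg _ h1
  linarith

lemma exists_inv_sqrt {d : A} (hd : IsSelfAdjoint d)
    (hspec : ∀ x ∈ spectrum ℝ d, (1:ℝ) ≤ x) :
    ∃ D t : A, d * D = 1 ∧ D * d = 1 ∧ IsSelfAdjoint D ∧ IsSelfAdjoint t ∧ t * t = D ∧
      (∀ w : A, Commute d w → Commute D w ∧ Commute t w) := by
  have hinv : ContinuousOn (fun x : ℝ => x⁻¹) (spectrum ℝ d) := by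
    apply ContinuousOn.inv₀ (continuous_id.continuousOn)
    intro x hx; have := hspec x hx; intro h0; simp at h0; linarith
  have hsq : ContinuousOn (fun x : ℝ => (Real.sqrt x)⁻¹) (spectrum ℝ d) := by
    apply ContinuousOn.inv₀ (Real.continuous_sqrt.continuousOn)
    intro x hx
    have h1 := hspec x hx
    positivity
  have e1 : cfc (fun x : ℝ => x * x⁻¹) d = 1 := by
    have h : (spectrum ℝ d).EqOn (fun x : ℝ => x * x⁻¹) (fun _ => 1) := fun x hx => by
      have := hspec x hx
      exact mul_inv_cancel₀ (by linarith)
    rw [cfc_congr h]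
    exact cfc_const_one ℝ d
  have e1' : cfc (fun x : ℝ => x⁻¹ * x) d = 1 := by
    have h : (spectrum ℝ d).EqOn (fun x : ℝ => x⁻¹ * x) (fun _ => 1) := fun x hx => by
      have := hspec x hx
      exact inv_mul_cancel₀ (by linarith)
    rw [cfc_congr h]
    exact cfc_const_one ℝ d
  refine ⟨cfc (fun x : ℝ => x⁻¹) d, cfc (fun x : ℝ => (Real.sqrt x)⁻¹) d, ?_, ?_,
    cfc_predicate _ d, cfc_predicate _ d, ?_, ?_⟩
  · have h2 := cfc_mul (fun x : ℝ => x) (fun x : ℝ => x⁻¹) d (continuous_id.continuousOn) hinv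
    rw [e1, cfc_id' ℝ d] at h2
    exact h2.symm
  · have h2 := cfc_mul (fun x : ℝ => x⁻¹) (fun x : ℝ => x) d hinv (continuous_id.continuousOn)
    rw [e1', cfc_id' ℝ d] at h2
    exact h2.symm
  · have h2 := cfc_mul (fun x : ℝ => (Real.sqrt x)⁻¹) (fun x : ℝ => (Real.sqrt x)⁻¹) d hsq hsq
    have h : (spectrum ℝ d).EqOn (fun x : ℝ => (Real.sqrt x)⁻¹ * (Real.sqrt x)⁻¹)
        (fun x : ℝ => x⁻¹) := fun x hx => by
      have h1 := hspec x hx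
      show (Real.sqrt x)⁻¹ * (Real.sqrt x)⁻¹ = x⁻¹
      rw [← mul_inv, Real.mul_self_sqrt (by linarith)]
    rw [cfc_congr h] at h2
    exact h2.symm
  · intro w hw
    exact ⟨commute_cfc' hd hw _, commute_cfc' hd hw _⟩

end Aux

section KeyMvN
variable {A : Type*} [CStarAlgebra A]

lemma key_mvn {π p : A} (hπ : π * π = π) (hp1 : IsSelfAdjoint p) (hp2 : p * p = p)
    (hπp : π * p = π) (hpπ : p * π = p) :
    ∃ pn v : A, IsSelfAdjoint pn ∧ pn * pn = pn ∧ pn * π = π ∧ π * pn = pn ∧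
      v * star v = p ∧ star v * v = pn := by
  set ρ := star π with hρdef
  have hρ : ρ * ρ = ρ := by rw [hρdef, ← star_mul, hπ]
  set w : A := π * ρ with hwdef
  set d : A := 1 - π - ρ + π * ρ + ρ * π with hddef
  have hπ' : ∀ x : A, π * (π * x) = π * x := fun x => by rw [← mul_assoc, hπ]
  have hρ' : ∀ x : A, ρ * (ρ * x) = ρ * x := fun x => by rw [← mul_assoc, hρ]
  have hsρ : star ρ = π := by rw [hρdef, star_star]
  have hd_sa : IsSelfAdjoint d := by
    rw [IsSelfAdjoint, hddef]
    simp only [star_add, star_sub, star_one, star_mul, star_star, ← hρdef, hsρ]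
    abel
  have hc : d = 1 + star (π - ρ) * (π - ρ) := by
    rw [hddef]
    simp only [star_sub, ← hρdef, hsρ, star_star, sub_mul, mul_sub, hπ, hρ]
    abel
  have hspec : ∀ x ∈ spectrum ℝ d, (1:ℝ) ≤ x := fun x hx => one_le_of_mem_spectrum hc hx
  have hdπ : d * π = π * (ρ * π) := by
    rw [hddef]
    simp only [sub_mul, add_mul, one_mul, mul_assoc, hπ, hπ']
    abel
  have hπd : π * d = π * (ρ * π) := by
    rw [hddef]
    simp only [mul_sub, mul_add, mul_one, mul_assoc, hπ, hπ', hρ']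
    abel
  have hdρ : d * ρ = ρ * (π * ρ) := by
    rw [hddef]
    simp only [sub_mul, add_mul, one_mul, mul_assoc, hρ, hρ', hπ']
    abel
  have hρd : ρ * d = ρ * (π * ρ) := by
    rw [hddef]
    simp only [mul_sub, mul_add, mul_one, mul_assoc, hρ, hρ', hπ']
    abel
  have hcomdπ : Commute d π := hdπ.trans hπd.symm
  have hcomdρ : Commute d ρ := hdρ.trans hρd.symm
  have hcomdw : Commute d w := hcomdπ.mul_right hcomdρ
  obtain ⟨D, t, hdD, hDd, hDsa, htsa, htt, hcom⟩ := exists_inv_sqrt hd_sa hspec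
  obtain ⟨hDπ, htπ⟩ := hcom π hcomdπ
  obtain ⟨hDρ, htρ⟩ := hcom ρ hcomdρ
  obtain ⟨hDw, htw⟩ := hcom w hcomdw
  have hww : w * w = w * d := by
    rw [hwdef, hddef]
    simp only [mul_sub, mul_add, mul_one, mul_assoc, hπ, hρ, hπ', hρ']
    abel
  have hρπρπ : (ρ * π) * (ρ * π) = (ρ * π) * d := by
    rw [hddef]
    simp only [mul_sub, mul_add, mul_one, mul_assoc, hπ, hρ, hπ', hρ']
    abel
  -- pn := w * D
  refine ⟨w * D, ρ * t, ?_, ?_, ?_, ?_, ?_, ?_⟩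
  · -- selfadjoint
    rw [IsSelfAdjoint, star_mul, hDsa.star_eq]
    have hws : star w = w := by
      rw [hwdef, star_mul, star_star, ← hρdef]
    rw [hws, hDw.eq]
  · -- idempotent
    calc (w*D)*(w*D) = w*((D*w)*D) := by simp only [mul_assoc]
      _ = w*((w*D)*D) := by rw [hDw.eq]
      _ = (w*w)*(D*D) := by simp only [mul_assoc]
      _ = (w*d)*(D*D) := by rw [hww]
      _ = w*((d*D)*D) := by simp only [mul_assoc]
      _ = w*D := by rw [hdD, one_mul]
  · -- pn * π = π
    calc (w*D)*π = w*(D*π) := by rw [mul_assoc]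
      _ = w*(π*D) := by rw [hDπ.eq]
      _ = (π*(ρ*π))*D := by simp only [hwdef, mul_assoc]
      _ = (π*d)*D := by rw [← hπd]
      _ = π*(d*D) := by rw [mul_assoc]
      _ = π := by rw [hdD, mul_one]
  · -- π * pn = pn
    calc π*(w*D) = (π*w)*D := by rw [← mul_assoc]
      _ = ((π*π)*ρ)*D := by rw [hwdef, ← mul_assoc]
      _ = (π*ρ)*D := by rw [hπ]
      _ = w*D := by rw [← hwdef]
  · -- v v* = p  where v = ρ * t
    rw [star_mul, htsa.star_eq, hsρ]
    have hP1 : (ρ*t)*(t*π) = (ρ*π)*D := by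
      calc (ρ*t)*(t*π) = ρ*((t*t)*π) := by rw [mul_assoc, ← mul_assoc t t π]
        _ = ρ*(D*π) := by rw [htt]
        _ = ρ*(π*D) := by rw [hDπ.eq]
        _ = (ρ*π)*D := by rw [← mul_assoc]
    rw [hP1]
    have hPρ : ((ρ*π)*D)*ρ = ρ := by
      calc ((ρ*π)*D)*ρ = (ρ*π)*(D*ρ) := by rw [mul_assoc]
        _ = (ρ*π)*(ρ*D) := by rw [hDρ.eq]
        _ = (ρ*(π*ρ))*D := by rw [← mul_assoc, mul_assoc ρ π ρ]
        _ = (ρ*d)*D := by rw [← hρd]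
        _ = ρ*(d*D) := by rw [mul_assoc]
        _ = ρ := by rw [hdD, mul_one]
    have hρP : ρ*((ρ*π)*D) = (ρ*π)*D := by
      rw [← mul_assoc, ← mul_assoc, hρ]
    have hPsa : star ((ρ*π)*D) = (ρ*π)*D := by
      rw [star_mul, hDsa.star_eq, star_mul, hsρ, ← hρdef]
      calc D*(ρ*π) = (D*ρ)*π := by rw [← mul_assoc]
        _ = (ρ*D)*π := by rw [hDρ.eq]
        _ = ρ*(D*π) := by rw [mul_assoc]
        _ = ρ*(π*D) := by rw [hDπ.eq]
        _ = (ρ*π)*D := by rw [← mul_assoc]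
    have hpρ : p * ρ = ρ := by
      have := congrArg star hπp
      rwa [star_mul, hp1.star_eq, ← hρdef] at this
    have hρp : ρ * p = p := by
      have := congrArg star hpπ
      rwa [star_mul, hp1.star_eq, ← hρdef] at this
    have h1 : ((ρ*π)*D)*p = p := by
      calc ((ρ*π)*D)*p = ((ρ*π)*D)*(ρ*p) := by rw [hρp]
        _ = (((ρ*π)*D)*ρ)*p := by rw [← mul_assoc]
        _ = ρ*p := by rw [hPρ]
        _ = p := hρp
    have h2 : p*((ρ*π)*D) = (ρ*π)*D := by
      calc p*((ρ*π)*D) = p*(ρ*((ρ*π)*D)) := by rw [hρP]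
        _ = (p*ρ)*((ρ*π)*D) := by rw [← mul_assoc]
        _ = ρ*((ρ*π)*D) := by rw [hpρ]
        _ = (ρ*π)*D := hρP
    have h3 : p*((ρ*π)*D) = p := by
      have := congrArg star h1
      rwa [star_mul, hp1.star_eq, hPsa] at this
    rw [← h2, h3]
  · -- star v * v = pn
    rw [star_mul, htsa.star_eq, hsρ]
    calc (t*π)*(ρ*t) = t*((π*ρ)*t) := by rw [mul_assoc, ← mul_assoc π ρ t]
      _ = (t*w)*t := by rw [← hwdef, ← mul_assoc]
      _ = (w*t)*t := by rw [htw.eq]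
      _ = w*(t*t) := by rw [mul_assoc]
      _ = w*D := by rw [htt]

end KeyMvN


section Directions
variable {A : Type*} [CStarAlgebra A]

lemma isClosedSubmodule_fix (a : A) : IsClosedSubmodule {x : A | a * x = x} := by
  refine ⟨isClosed_eq (continuous_const.mul continuous_id) continuous_id, by simp, ?_, ?_, ?_, ?_⟩
  · intro x hx y hy
    simp only [Set.mem_setOf_eq] at *
    rw [mul_add, hx, hy]
  · intro x hx a
    simp only [Set.mem_setOf_eq] at *
    rw [← mul_assoc, hx]
  · intro x hx
    simp only [Set.mem_setOf_eq] at *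
    rw [mul_neg, hx]
  · intro x hx c
    simp only [Set.mem_setOf_eq] at *
    rw [mul_smul_comm, hx]

lemma isClosedSubmodule_ker (a : A) : IsClosedSubmodule {x : A | a * x = 0} := by
  refine ⟨isClosed_eq (continuous_const.mul continuous_id) continuous_const, by simp, ?_, ?_, ?_, ?_⟩
  · intro x hx y hy
    simp only [Set.mem_setOf_eq] at *
    rw [mul_add, hx, hy, add_zero]
  · intro x hx a
    simp only [Set.mem_setOf_eq] at *
    rw [← mul_assoc, hx, zero_mul]
  · intro x hx
    simp only [Set.mem_setOf_eq] at *
    rw [mul_neg, hx, neg_zero]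
  · intro x hx c
    simp only [Set.mem_setOf_eq] at *
    rw [mul_smul_comm, hx, smul_zero]

lemma sub_mem_of_isClosedSubmodule {S : Set A} (hS : IsClosedSubmodule S) {x y : A}
    (hx : x ∈ S) (hy : y ∈ S) : x - y ∈ S := by
  rw [sub_eq_add_neg]
  exact hS.2.2.1 x hx (-y) (hS.2.2.2.2.1 y hy)

lemma stmt10_dir1 (F : A) (pN1 pN2 : A) (h : HasDiagDecomp F pN1 pN2) :
    ∃ p q : A, IsProjn p ∧ IsProjn q ∧ InvUpTo F p q ∧ MvN p pN1 ∧ MvN q pN2 := by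
  obtain ⟨M1, N1, M2, N2, hM1, hN1, hM2, hN2, hc1, hc2, hiso, hdiag, hpn1, hpn2⟩ := h
  obtain ⟨hp_sa, hp_idem, hN1eq⟩ := hpn1
  obtain ⟨hq_sa, hq_idem, hN2eq⟩ := hpn2
  have memN1 : ∀ x : A, x ∈ N1 ↔ pN1 * x = x := fun x => by rw [hN1eq]; rfl
  have memN2 : ∀ x : A, x ∈ N2 ↔ pN2 * x = x := fun x => by rw [hN2eq]; rfl
  -- uniqueness of decompositions
  have uniq1 : ∀ m n m' n' : A, m ∈ M1 → n ∈ N1 → m' ∈ M1 → n' ∈ N1 →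
      m + n = m' + n' → m = m' := by
    intro m n m' n' hm hn hm' hn' heq
    have hsub : m - m' = n' - n := by
      have := congrArg (fun z => z - m' - n) heq
      simpa [sub_eq_add_neg, add_assoc, add_comm, add_left_comm] using this
    have hmem : m - m' ∈ M1 ∩ N1 := by
      constructor
      · exact sub_mem_of_isClosedSubmodule hM1 hm hm'
      · rw [hsub]; exact sub_mem_of_isClosedSubmodule hN1 hn' hn
    have := hc1.1 hmem
    simp only [Set.mem_singleton_iff] at this
    exact sub_eq_zero.mp this
  have uniq2 : ∀ m n m' n' : A, m ∈ M2 → n ∈ N2 → m' ∈ M2 → n' ∈ N2 →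
      m + n = m' + n' → m = m' := by
    intro m n m' n' hm hn hm' hn' heq
    have hsub : m - m' = n' - n := by
      have := congrArg (fun z => z - m' - n) heq
      simpa [sub_eq_add_neg, add_assoc, add_comm, add_left_comm] using this
    have hmem : m - m' ∈ M2 ∩ N2 := by
      constructor
      · exact sub_mem_of_isClosedSubmodule hM2 hm hm'
      · rw [hsub]; exact sub_mem_of_isClosedSubmodule hN2 hn' hn
    have := hc2.1 hmem
    simp only [Set.mem_singleton_iff] at this
    exact sub_eq_zero.mp this
  obtain ⟨ε, hεM, n₁, hn₁N, hεn⟩ := hc1.2 1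
  obtain ⟨δ, hδM, n₂, hn₂N, hδn⟩ := hc2.2 1
  -- ε fixes M1, kills N1
  have fixM1 : ∀ y ∈ M1, ε * y = y := by
    intro y hy
    have hdec : ε*y + n₁*y = y + 0 := by
      rw [add_zero, ← add_mul, ← hεn, one_mul]
    exact uniq1 _ _ _ _ (hM1.2.2.2.1 ε hεM y) (hN1.2.2.2.1 n₁ hn₁N y) hy hN1.2.1 hdec
  have killN1 : ∀ y ∈ N1, ε * y = 0 := by
    intro y hy
    have hdec : ε*y + n₁*y = 0 + y := by
      rw [zero_add, ← add_mul, ← hεn, one_mul]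
    exact uniq1 _ _ _ _ (hM1.2.2.2.1 ε hεM y) (hN1.2.2.2.1 n₁ hn₁N y) hM1.2.1 hy hdec
  have fixM2 : ∀ y ∈ M2, δ * y = y := by
    intro y hy
    have hdec : δ*y + n₂*y = y + 0 := by
      rw [add_zero, ← add_mul, ← hδn, one_mul]
    exact uniq2 _ _ _ _ (hM2.2.2.2.1 δ hδM y) (hN2.2.2.2.1 n₂ hn₂N y) hy hN2.2.1 hdec
  have killN2 : ∀ y ∈ N2, δ * y = 0 := by
    intro y hy
    have hdec : δ*y + n₂*y = 0 + y := by
      rw [zero_add, ← add_mul, ← hδn, one_mul]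
    exact uniq2 _ _ _ _ (hM2.2.2.2.1 δ hδM y) (hN2.2.2.2.1 n₂ hn₂N y) hM2.2.1 hy hdec
  have hpmem : pN1 ∈ N1 := (memN1 pN1).mpr hp_idem
  have hqmem : pN2 ∈ N2 := (memN2 pN2).mpr hq_idem
  have hpfix : ∀ y ∈ N1, pN1 * y = y := fun y hy => (memN1 y).mp hy
  have hqfix : ∀ y ∈ N2, pN2 * y = y := fun y hy => (memN2 y).mp hy
  have hpN1mem : ∀ x : A, pN1 * x ∈ N1 := by
    intro x
    rw [memN1, ← mul_assoc, hp_idem]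
  obtain ⟨hmapM, hsurj, cc, hcpos, hbdd⟩ := hiso
  have injM1 : ∀ x ∈ M1, F * x = 0 → x = 0 := by
    intro x hx hFx
    have h3 := hbdd x hx
    rw [hFx, norm_zero] at h3
    have h4 : ‖x‖ = 0 := by nlinarith [norm_nonneg x]
    exact norm_eq_zero.mp h4
  obtain ⟨g₀, hg₀M, hFg₀⟩ := hsurj δ hδM
  have hδδ : δ * δ = δ := fixM2 δ hδM
  set g : A := g₀ * δ with hgdef
  have hgM : g ∈ M1 := hM1.2.2.2.1 g₀ hg₀M δ
  have hFg : F * g = δ := by rw [hgdef, ← mul_assoc, hFg₀, hδδ]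
  have hgq : g * pN2 = 0 := by
    rw [hgdef, mul_assoc, killN2 pN2 hqmem, mul_zero]
  have hgN2 : ∀ y ∈ N2, g * y = 0 := by
    intro y hy
    rw [hgdef, mul_assoc, killN2 y hy, mul_zero]
  have hgF : ∀ m ∈ M1, g * (F * m) = m := by
    intro m hm
    have h5 : δ * (F * m) = F * m := fixM2 _ (hmapM m hm)
    have h6 : g * (F * m) = g₀ * (F * m) := by
      rw [hgdef, mul_assoc, h5]
    have h7 : g₀ * (F * m) - m ∈ M1 :=
      sub_mem_of_isClosedSubmodule hM1 (hM1.2.2.2.1 g₀ hg₀M (F*m)) hm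
    have h8 : F * (g₀ * (F * m) - m) = 0 := by
      rw [mul_sub, ← mul_assoc, hFg₀, h5, sub_self]
    have h9 := injM1 _ h7 h8
    rw [h6, sub_eq_zero.mp h9]
  -- now verify invertibility up to (pN1, pN2)
  refine ⟨pN1, pN2, ⟨hp_sa, hp_idem⟩, ⟨hq_sa, hq_idem⟩,
    ⟨(1-pN1)*(g*(1-pN2)), ?_, ?_⟩,
    ⟨pN1, by rw [hp_sa.star_eq, hp_idem], by rw [hp_sa.star_eq, hp_idem]⟩,
    ⟨pN2, by rw [hq_sa.star_eq, hq_idem], by rw [hq_sa.star_eq, hq_idem]⟩⟩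
  · -- (1-q) F (1-p) b = 1-q
    have hEE : ((1:A)-pN1)*((1:A)-pN1) = (1:A)-pN1 := by
      simp only [sub_mul, mul_sub, one_mul, mul_one, hp_idem]; abel
    have hz : ∀ y : A, (((1:A)-pN2)*F)*(pN1*y) = 0 := by
      intro y
      have hy2 : F*(pN1*y) ∈ N2 := hdiag _ (hpN1mem y)
      rw [mul_assoc, sub_mul, one_mul, hqfix _ hy2, sub_self]
    have hqn2 : pN2*n₂ = n₂ := hqfix n₂ hn₂N
    have hδeq : δ = 1 - n₂ := by rw [hδn]; abel
    have hQδ : ((1:A)-pN2)*δ = (1:A)-pN2 := by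
      rw [sub_mul, one_mul]
      nth_rewrite 2 [hδeq]
      rw [mul_sub, mul_one, hqn2, hδeq]
      abel
    calc (((1-pN2)*F)*(1-pN1))*((1-pN1)*(g*(1-pN2)))
        = ((1-pN2)*F)*((((1:A)-pN1)*((1:A)-pN1))*(g*(1-pN2))) := by
          rw [mul_assoc ((1-pN2)*F) (1-pN1) _, ← mul_assoc (1-pN1) (1-pN1) _]
      _ = ((1-pN2)*F)*(((1:A)-pN1)*(g*(1-pN2))) := by rw [hEE]
      _ = ((1-pN2)*F)*(g*(1-pN2)) - ((1-pN2)*F)*(pN1*(g*(1-pN2))) := by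
          rw [sub_mul (1:A) pN1 _, one_mul, mul_sub]
      _ = ((1-pN2)*F)*(g*(1-pN2)) := by rw [hz _, sub_zero]
      _ = (1-pN2)*(δ*(1-pN2)) := by
          rw [mul_assoc (1-pN2) F _, ← mul_assoc F g _, hFg]
      _ = (1-pN2)*δ := by rw [mul_sub, mul_one, killN2 pN2 hqmem, sub_zero]
      _ = 1-pN2 := hQδ
  · -- b (1-q) F (1-p) = 1-p
    have hg1Q : g*((1:A)-pN2) = g := by rw [mul_sub, mul_one, hgq, sub_zero]
    have hgY : g*((((1:A)-pN2)*F)*((1:A)-pN1)) = ε := by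
      have s1 : g*(((1:A)-pN2)*F) = g*F := by
        rw [← mul_assoc, hg1Q]
      rw [← mul_assoc, s1]
      have s2 : (g*F)*pN1 = 0 := by
        rw [mul_assoc]
        exact hgN2 _ (hdiag _ hpmem)
      rw [mul_sub, mul_one, s2, sub_zero]
      calc g*F = (g*F)*1 := by rw [mul_one]
        _ = (g*F)*ε + (g*F)*n₁ := by rw [hεn, mul_add]
        _ = ε + 0 := by rw [mul_assoc g F ε, mul_assoc g F n₁, hgF ε hεM, hgN2 _ (hdiag _ hn₁N)]
        _ = ε := add_zero ε
    have hpn1 : pN1*n₁ = n₁ := hpfix n₁ hn₁N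
    have hεeq : ε = 1 - n₁ := by rw [hεn]; abel
    calc ((1-pN1)*(g*(1-pN2)))*(((1-pN2)*F)*(1-pN1))
        = ((1-pN1)*g)*(((1-pN2)*F)*(1-pN1)) := by rw [hg1Q]
      _ = (1-pN1)*(g*(((1-pN2)*F)*(1-pN1))) := by rw [mul_assoc]
      _ = ((1:A)-pN1)*ε := by rw [hgY]
      _ = ε - pN1*ε := by rw [sub_mul, one_mul]
      _ = 1-pN1 := by
          nth_rewrite 2 [hεeq]
          rw [mul_sub, mul_one, hpn1, hεeq]
          abel

lemma stmt10_dir2 (F : A) (p q : A) (hp : IsProjn p) (hq : IsProjn q) (h : InvUpTo F p q) :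
    ∃ pN1 pN2 : A, HasDiagDecomp F pN1 pN2 ∧ MvN pN1 p ∧ MvN pN2 q := by
  obtain ⟨b₀, h1, h2⟩ := h
  set e : A := 1 - p with hedef
  set f : A := 1 - q with hfdef
  have hpp : p * p = p := hp.2
  have hqq : q * q = q := hq.2
  have hee : e * e = e := by
    rw [hedef]; simp only [sub_mul, mul_sub, one_mul, mul_one, hpp]; abel
  have hff : f * f = f := by
    rw [hfdef]; simp only [sub_mul, mul_sub, one_mul, mul_one, hqq]; abel
  have hfq : f * q = 0 := by rw [hfdef, sub_mul, one_mul, hqq, sub_self]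
  have hqf : q * f = 0 := by rw [hfdef, mul_sub, mul_one, hqq, sub_self]
  have hpe : p * e = 0 := by rw [hedef, mul_sub, mul_one, hpp, sub_self]
  have hfq1 : f + q = 1 := by rw [hfdef]; abel
  set b : A := (e * b₀) * f with hbdef
  have heb : e * b = b := by rw [hbdef, ← mul_assoc, ← mul_assoc, hee]
  have hbf : b * f = b := by rw [hbdef, mul_assoc, hff]
  have hbq : b * q = 0 := by rw [hbdef, mul_assoc, hfq, mul_zero]
  have hpb : p * b = 0 := by
    rw [hbdef, ← mul_assoc, ← mul_assoc, hpe, zero_mul, zero_mul]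
  have k1 : ((f * F) * e) * b = f := by
    calc ((f*F)*e)*b = ((((f*F)*e)*e)*b₀)*f := by rw [hbdef, ← mul_assoc, ← mul_assoc]
      _ = (((f*F)*e)*b₀)*f := by rw [mul_assoc (f*F) e e, hee]
      _ = f*f := by rw [h1]
      _ = f := hff
  have k2 : b * ((f * F) * e) = e := by
    calc b*((f*F)*e) = (e*b₀)*((f*((f*F))*e)) := by
          rw [hbdef, mul_assoc (e*b₀) f ((f*F)*e), ← mul_assoc f (f*F) e]
      _ = (e*b₀)*((f*F)*e) := by rw [← mul_assoc f f F, hff]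
      _ = e*(b₀*((f*F)*e)) := by rw [mul_assoc]
      _ = e*e := by rw [h2]
      _ = e := hee
  have hfFb : (f * F) * b = f := by
    calc (f*F)*b = (((f*F)*e)*b₀)*f := by rw [hbdef, ← mul_assoc, ← mul_assoc]
      _ = f*f := by rw [h1]
      _ = f := hff
  have hbFe : b * (F * e) = e := by
    calc b*(F*e) = (b*f)*(F*e) := by rw [hbf]
      _ = b*((f*F)*e) := by rw [mul_assoc, ← mul_assoc f F e]
      _ = e := k2
  have hbFb : b * (F * b) = b := by
    calc b*(F*b) = b*(F*(e*b)) := by rw [heb]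
      _ = b*((F*e)*b) := by rw [mul_assoc F e b]
      _ = (b*(F*e))*b := by rw [← mul_assoc]
      _ = e*b := by rw [hbFe]
      _ = b := heb
  set c : A := q * (F * b) with hcdef
  have hFb : F * b = f + c := by
    calc F*b = ((f+q)*F)*b := by rw [hfq1, one_mul]
      _ = ((f*F)+(q*F))*b := by rw [add_mul]
      _ = (f*F)*b + (q*F)*b := by rw [add_mul]
      _ = f + c := by rw [hfFb, hcdef, mul_assoc]
  set r : A := F * b with hrdef
  have hrr : r * r = r := by
    nth_rewrite 1 [hrdef]
    rw [mul_assoc, hbFb]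
  have hfr : f * r = f := by rw [hrdef, ← mul_assoc, hfFb]
  have hrq : r * q = 0 := by rw [hrdef, mul_assoc, hbq, mul_zero]
  have hqc : q * c = c := by rw [hcdef, ← mul_assoc, hqq]
  have h1r : (1:A) - r = q - c := by
    rw [hFb, hfdef]; abel
  have hq1r : q * ((1:A) - r) = (1:A) - r := by
    rw [h1r, mul_sub, hqq, hqc]
  -- the four submodules
  set M1 : Set A := {x : A | e * x = x} with hM1def
  set N1 : Set A := {x : A | (f * F) * x = 0} with hN1def
  set M2 : Set A := {x : A | r * x = x} with hM2def
  set N2 : Set A := {x : A | q * x = x} with hN2def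
  -- the idempotent π with range N1
  set π : A := 1 - b * F with hπdef
  have hbFbF : (b*F)*(b*F) = b*F := by
    rw [mul_assoc b F (b*F), ← mul_assoc F b F, ← mul_assoc b (F*b) F, hbFb]
  have hππ : π * π = π := by
    rw [hπdef]
    simp only [sub_mul, mul_sub, one_mul, mul_one, hbFbF]
    abel
  have hπe : π * e = 0 := by
    rw [hπdef, sub_mul, one_mul, mul_assoc, hbFe, sub_self]
  have hπp : π * p = π := by
    have hpeq : p = 1 - e := by rw [hedef]; abel
    rw [hpeq, mul_sub, mul_one, hπe, sub_zero]
  have hpπ : p * π = p := by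
    rw [hπdef, mul_sub, mul_one, ← mul_assoc, hpb, zero_mul, sub_zero]
  obtain ⟨pn, v, hpn_sa, hpn_idem, hpnπ, hπpn, hv1, hv2⟩ := key_mvn hππ hp.1 hp.2 hπp hpπ
  -- membership characterizations
  have hNπ : ∀ x : A, ((f*F)*x = 0) ↔ π * x = x := by
    intro x
    constructor
    · intro hx
      have hb0 : (b*F)*x = 0 := by
        calc (b*F)*x = ((b*f)*F)*x := by rw [hbf]
          _ = b*((f*F)*x) := by rw [mul_assoc b f F, mul_assoc]
          _ = 0 := by rw [hx, mul_zero]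
      rw [hπdef, sub_mul, one_mul, hb0, sub_zero]
    · intro hx
      have hb0 : (b*F)*x = 0 := by
        have := congrArg (fun y => x - y) hx
        simp only [hπdef, sub_mul, one_mul, sub_sub_cancel] at this
        rw [this, sub_self]
      calc (f*F)*x = (((f*F)*b)*F)*x := by rw [hfFb]
        _ = (f*F)*((b*F)*x) := by rw [mul_assoc (f*F) b F, mul_assoc]
        _ = 0 := by rw [hb0, mul_zero]
  have hNpn : ∀ x : A, (π * x = x) ↔ pn * x = x := by
    intro x
    constructor
    · intro hx
      calc pn*x = pn*(π*x) := by rw [hx]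
        _ = (pn*π)*x := by rw [← mul_assoc]
        _ = π*x := by rw [hpnπ]
        _ = x := hx
    · intro hx
      calc π*x = π*(pn*x) := by rw [hx]
        _ = (π*pn)*x := by rw [← mul_assoc]
        _ = pn*x := by rw [hπpn]
        _ = x := hx
  refine ⟨pn, q, ⟨M1, N1, M2, N2, ?_, ?_, ?_, ?_, ?_, ?_, ?_, ?_, ?_, ?_⟩, ⟨v, hv1, hv2⟩,
    ⟨q, by rw [hq.1.star_eq, hqq], by rw [hq.1.star_eq, hqq]⟩⟩
  · exact isClosedSubmodule_fix e
  · exact isClosedSubmodule_ker (f * F)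
  · exact isClosedSubmodule_fix r
  · exact isClosedSubmodule_fix q
  · -- IsComplPair M1 N1
    constructor
    · rintro x ⟨hx1, hx2⟩
      simp only [hM1def, hN1def, Set.mem_setOf_eq] at hx1 hx2
      have : x = 0 := by
        calc x = e*x := hx1.symm
          _ = (b*((f*F)*e))*x := by rw [k2]
          _ = b*((f*F)*(e*x)) := by rw [mul_assoc b ((f*F)*e) x, mul_assoc (f*F) e x]
          _ = b*((f*F)*x) := by rw [hx1]
          _ = 0 := by rw [hx2, mul_zero]
      simp [this]
    · intro x
      refine ⟨b*(F*x), ?_, x - b*(F*x), ?_, by abel⟩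
      · simp only [hM1def, Set.mem_setOf_eq]
        rw [← mul_assoc, heb]
      · simp only [hN1def, Set.mem_setOf_eq]
        rw [mul_sub]
        have : (f*F)*(b*(F*x)) = (f*F)*x := by
          calc (f*F)*(b*(F*x)) = ((f*F)*b)*(F*x) := by rw [← mul_assoc]
            _ = f*(F*x) := by rw [hfFb]
            _ = (f*F)*x := by rw [← mul_assoc]
        rw [this, sub_self]
  · -- IsComplPair M2 N2
    constructor
    · rintro x ⟨hx1, hx2⟩
      simp only [hM2def, hN2def, Set.mem_setOf_eq] at hx1 hx2
      have : x = 0 := by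
        calc x = r*x := hx1.symm
          _ = r*(q*x) := by rw [hx2]
          _ = (r*q)*x := by rw [← mul_assoc]
          _ = 0 := by rw [hrq, zero_mul]
      simp [this]
    · intro x
      refine ⟨r*x, ?_, x - r*x, ?_, by abel⟩
      · simp only [hM2def, Set.mem_setOf_eq]
        rw [← mul_assoc, hrr]
      · simp only [hN2def, Set.mem_setOf_eq]
        have hxr : x - r*x = ((1:A) - r)*x := by rw [sub_mul, one_mul]
        rw [hxr, ← mul_assoc, hq1r]
  · -- IsIsoOn F M1 M2
    refine ⟨?_, ?_, ?_⟩
    · intro x hx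
      simp only [hM1def, hM2def, Set.mem_setOf_eq] at hx ⊢
      have hbx : b*(F*x) = x := by
        calc b*(F*x) = b*(F*(e*x)) := by rw [hx]
          _ = b*((F*e)*x) := by rw [mul_assoc F e x]
          _ = (b*(F*e))*x := by rw [← mul_assoc]
          _ = e*x := by rw [hbFe]
          _ = x := hx
      calc r*(F*x) = F*(b*(F*x)) := by rw [hrdef, mul_assoc]
        _ = F*x := by rw [hbx]
    · intro y hy
      simp only [hM1def, hM2def, Set.mem_setOf_eq] at hy ⊢
      refine ⟨b*y, ?_, ?_⟩
      · rw [← mul_assoc, heb]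
      · rw [← mul_assoc, ← hrdef, hy]
    · refine ⟨(‖b‖+1)⁻¹, by positivity, ?_⟩
      intro x hx
      simp only [hM1def, Set.mem_setOf_eq] at hx
      have hbx : b*(F*x) = x := by
        calc b*(F*x) = b*(F*(e*x)) := by rw [hx]
          _ = b*((F*e)*x) := by rw [mul_assoc F e x]
          _ = (b*(F*e))*x := by rw [← mul_assoc]
          _ = e*x := by rw [hbFe]
          _ = x := hx
      have hn1 : ‖x‖ ≤ (‖b‖+1) * ‖F*x‖ := by
        calc ‖x‖ = ‖b*(F*x)‖ := by rw [hbx]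
          _ ≤ ‖b‖ * ‖F*x‖ := norm_mul_le _ _
          _ ≤ (‖b‖+1) * ‖F*x‖ := by nlinarith [norm_nonneg (F*x)]
      have hpos : (0:ℝ) < ‖b‖+1 := by positivity
      calc (‖b‖+1)⁻¹ * ‖x‖ ≤ (‖b‖+1)⁻¹ * ((‖b‖+1) * ‖F*x‖) := by
            exact mul_le_mul_of_nonneg_left hn1 (le_of_lt (inv_pos.mpr hpos))
        _ = ‖F*x‖ := by rw [← mul_assoc, inv_mul_cancel₀ hpos.ne', one_mul]
  · -- F maps N1 into N2
    intro x hx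
    simp only [hN1def, hN2def, Set.mem_setOf_eq] at hx ⊢
    have : F*x = q*(F*x) + f*(F*x) := by
      calc F*x = ((q+f)*F)*x := by rw [add_comm q f, hfq1, one_mul]
        _ = q*(F*x) + f*(F*x) := by rw [add_mul, add_mul, mul_assoc, mul_assoc]
    rw [← mul_assoc f F x, hx, add_zero] at this
    exact this.symm
  · -- IsOrthProjOnto pn N1
    refine ⟨hpn_sa, hpn_idem, ?_⟩
    ext x
    simp only [hN1def, Set.mem_setOf_eq]
    rw [hNπ x, hNpn x]
  · -- IsOrthProjOnto q N2
    exact ⟨hq.1, hqq, rfl⟩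

end Directions

/-- `F` admits a diagonalizing decomposition with corner submodules
`N₁, N₂` iff `F` is invertible up to a pair of projections `(p, q)` with `p ∼ P_{N₁}`
and `q ∼ P_{N₂}`. -/
theorem stmt_10 {A : Type*} [CStarAlgebra A] (F : A) :
    (∀ pN1 pN2 : A, HasDiagDecomp F pN1 pN2 →
      ∃ p q : A, IsProjn p ∧ IsProjn q ∧ InvUpTo F p q ∧ MvN p pN1 ∧ MvN q pN2) ∧
    (∀ p q : A, IsProjn p → IsProjn q → InvUpTo F p q →
      ∃ pN1 pN2 : A, HasDiagDecomp F pN1 pN2 ∧ MvN pN1 p ∧ MvN pN2 q) := by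
  constructor
  · exact fun pN1 pN2 h => stmt10_dir1 F pN1 pN2 h
  · exact fun p q hp hq h => stmt10_dir2 F p q hp hq h
end
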